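/- arXiv:2406.14667 — 3 statements merged into one kernel-verified Lean document; each statement's English description precedes it below -/
import Mathlib

section
/- Let Γ be a combinatorial graph of uniform polynomial growth (there are constants c < C and an integer d with c·r^d ≤ #(B ∩ Γ⁰) ≤ C·r^d for every ball B of radius r). Then there exists a bounded-valence graph H_bv(Γ) containing Γ as a subgraph such that the identity map on Γ extends to a quasi-isometry from H_bv(Γ) to the combinatorial horoball H(Γ) based on Γ. -/
open SimpleGraph

/-- The combinatorial horoball based on a graph `G`: vertex set `V × ℕ`, vertical edges from
`(x, n)` to `(x, n+1)`, and horizontal edges from `(x, n)` to `(y, n)` when `d_G(x,y) ≤ 2^n`. -/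
def combHoroball {V : Type*} (G : SimpleGraph V) : SimpleGraph (V × ℕ) :=
  SimpleGraph.fromRel fun a b =>
    (a.1 = b.1 ∧ b.2 = a.2 + 1) ∨ (a.2 = b.2 ∧ G.dist a.1 b.1 ≤ 2 ^ a.2)

/-- A graph has bounded valence if there is a uniform bound on vertex degrees. -/
def BoundedValence {W : Type*} (H : SimpleGraph W) : Prop :=
  ∃ N : ℕ, ∀ w : W, (H.neighborSet w).Finite ∧ (H.neighborSet w).ncard ≤ N

universe u

open scoped Classical

namespace HoroAux

variable {V : Type u} (G : SimpleGraph V)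

/-- A maximal `k`-separated subset of `S` exists. -/
lemma exists_net (S : Set V) (k : ℕ) :
    ∃ T : Set V, T ⊆ S ∧ (T.Pairwise fun x y => k < G.dist x y) ∧
      ∀ v ∈ S, ∃ w ∈ T, G.dist v w ≤ k := by
  have hch : ∀ cCh ⊆ {T : Set V | T ⊆ S ∧ T.Pairwise fun x y => k < G.dist x y},
      IsChain (· ⊆ ·) cCh → ∃ ub ∈ {T : Set V | T ⊆ S ∧
        T.Pairwise fun x y => k < G.dist x y}, ∀ s ∈ cCh, s ⊆ ub := by
    intro cCh hsub hchain
    refine ⟨⋃₀ cCh, ⟨Set.sUnion_subset fun t ht => (hsub ht).1, ?_⟩,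
      fun s hs => Set.subset_sUnion_of_mem hs⟩
    intro x hx y hy hne
    obtain ⟨t1, ht1, hx1⟩ := hx
    obtain ⟨t2, ht2, hy2⟩ := hy
    rcases hchain.total ht1 ht2 with h | h
    · exact (hsub ht2).2 (h hx1) hy2 hne
    · exact (hsub ht1).2 hx1 (h hy2) hne
  obtain ⟨m, hm⟩ := zorn_subset
      {T : Set V | T ⊆ S ∧ T.Pairwise fun x y => k < G.dist x y} hch
  · refine ⟨m, hm.prop.1, hm.prop.2, ?_⟩
    intro v hv
    by_contra hcon
    push_neg at hcon
    have hvm : v ∉ m := by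
      intro h
      have := hcon v h
      simp [SimpleGraph.dist_self] at this
    have hmem : insert v m ∈
        {T : Set V | T ⊆ S ∧ T.Pairwise fun x y => k < G.dist x y} := by
      refine ⟨Set.insert_subset hv hm.prop.1, ?_⟩
      refine Set.Pairwise.insert hm.prop.2 ?_
      intro w hw hne
      have h1 : k < G.dist v w := hcon w hw
      have h2 : k < G.dist w v := by rwa [SimpleGraph.dist_comm]
      first
      | exact ⟨h1, h2⟩
      | exact ⟨h2, h1⟩
    have heq := hm.eq_of_subset hmem (Set.subset_insert _ _)
    exact hvm (by rw [heq]; exact Set.mem_insert v m)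

/-- The nested sequence of nets: `net 0 = V`, `net (n+1)` a maximal `2^(n+1)`-separated
subset of `net n`. -/
noncomputable def net : ℕ → Set V
  | 0 => Set.univ
  | n + 1 => (exists_net G (net n) (2 ^ (n + 1))).choose

lemma net_succ_spec (n : ℕ) :
    net G (n + 1) ⊆ net G n ∧
    ((net G (n + 1)).Pairwise fun x y => 2 ^ (n + 1) < G.dist x y) ∧
    ∀ v ∈ net G n, ∃ w ∈ net G (n + 1), G.dist v w ≤ 2 ^ (n + 1) :=
  (exists_net G (net G n) (2 ^ (n + 1))).choose_spec

lemma net_succ_subset (n : ℕ) : net G (n + 1) ⊆ net G n := (net_succ_spec G n).1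

lemma net_pairwise (n : ℕ) :
    (net G (n + 1)).Pairwise fun x y => 2 ^ (n + 1) < G.dist x y :=
  (net_succ_spec G n).2.1

lemma net_cover (n : ℕ) : ∀ v ∈ net G n, ∃ w ∈ net G (n + 1), G.dist v w ≤ 2 ^ (n + 1) :=
  (net_succ_spec G n).2.2

@[simp] lemma net_zero : net G 0 = Set.univ := rfl

/-- Projection to the next level's net. -/
noncomputable def pmap (n : ℕ) (v : V) : V :=
  if v ∈ net G (n + 1) then v
  else if h : v ∈ net G n then (net_cover G n v h).choose
  else v

lemma pmap_fix {n : ℕ} {v : V} (h : v ∈ net G (n + 1)) : pmap G n v = v := by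
  simp [pmap, h]

lemma pmap_mem {n : ℕ} {v : V} (h : v ∈ net G n) : pmap G n v ∈ net G (n + 1) := by
  unfold pmap
  split
  · assumption
  · exact (net_cover G n v h).choose_spec.1

lemma pmap_dist {n : ℕ} {v : V} (h : v ∈ net G n) : G.dist v (pmap G n v) ≤ 2 ^ (n + 1) := by
  unfold pmap
  split
  · simp [SimpleGraph.dist_self]
  · exact (net_cover G n v h).choose_spec.2

/-- The iterated projection from the bottom level. -/
noncomputable def qmap (v : V) : ℕ → V
  | 0 => v
  | n + 1 => pmap G n (qmap v n)

lemma qmap_mem (v : V) (n : ℕ) : qmap G v n ∈ net G n := by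
  induction n with
  | zero => exact Set.mem_univ v
  | succ n ih => exact pmap_mem G ih

lemma qmap_dist (hG : G.Connected) (v : V) (n : ℕ) : G.dist v (qmap G v n) ≤ 2 ^ (n + 1) := by
  induction n with
  | zero => simp [qmap, SimpleGraph.dist_self]
  | succ n ih =>
      calc G.dist v (qmap G v (n + 1)) ≤
          G.dist v (qmap G v n) + G.dist (qmap G v n) (qmap G v (n + 1)) :=
            hG.dist_triangle
        _ ≤ 2 ^ (n + 1) + 2 ^ (n + 1) := add_le_add ih (pmap_dist G (qmap_mem G v n))
        _ = 2 ^ (n + 2) := by ring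



/-- The vertex set of the bounded-valence model. -/
def Wt := {x : V × ℕ // x.1 ∈ net G x.2}

/-- The bounded-valence model graph. -/
noncomputable def Hgr : SimpleGraph (Wt G) :=
  SimpleGraph.fromRel fun a b =>
    (b.1.2 = a.1.2 + 1 ∧ b.1.1 = pmap G a.1.2 a.1.1) ∨
    (a.1.2 = b.1.2 ∧ ((a.1.2 = 0 ∧ G.Adj a.1.1 b.1.1) ∨
      (1 ≤ a.1.2 ∧ G.dist a.1.1 b.1.1 ≤ 10 * 2 ^ a.1.2)))

/-- Generic transfer of distances along a map contracting edges. -/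
lemma dist_map_le {A B : Type*} {Γ : SimpleGraph A} {Δ : SimpleGraph B}
    (hΓ : Γ.Connected) (hΔ : Δ.Connected) (f : A → B) (K : ℕ)
    (hK : ∀ a b : A, Γ.Adj a b → Δ.dist (f a) (f b) ≤ K) (a b : A) :
    Δ.dist (f a) (f b) ≤ K * Γ.dist a b := by
  obtain ⟨p, hp⟩ := hΓ.exists_walk_length_eq_dist a b
  rw [← hp]
  clear hp
  induction p with
  | nil => simp [SimpleGraph.dist_self]
  | @cons x y z h p ih =>
      calc Δ.dist (f x) (f z) ≤ Δ.dist (f x) (f y) + Δ.dist (f y) (f z) := hΔ.dist_triangle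
        _ ≤ K + K * p.length := add_le_add (hK _ _ h) ih
        _ = K * (SimpleGraph.Walk.cons h p).length := by
            simp [SimpleGraph.Walk.length_cons]; ring

lemma horo_adj_vert (x : V) (n : ℕ) : (combHoroball G).Adj (x, n) (x, n + 1) :=
  ⟨by simp, Or.inl (Or.inl ⟨rfl, rfl⟩)⟩

lemma horo_adj_horiz {x y : V} {n : ℕ} (hne : x ≠ y) (h : G.dist x y ≤ 2 ^ n) :
    (combHoroball G).Adj (x, n) (y, n) :=
  ⟨by simp [hne], Or.inl (Or.inr ⟨rfl, h⟩)⟩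

/-- The vertical walk in the horoball. -/
def vertWalk (x : V) (n : ℕ) : (k : ℕ) → (combHoroball G).Walk (x, n) (x, n + k)
  | 0 => SimpleGraph.Walk.nil
  | k + 1 => (vertWalk x n k).concat (horo_adj_vert G x (n + k))

lemma vertWalk_length (x : V) (n k : ℕ) : (vertWalk G x n k).length = k := by
  induction k with
  | zero => rfl
  | succ k ih => rw [vertWalk, SimpleGraph.Walk.length_concat, ih]

lemma horo_dist_vert (x : V) (n k : ℕ) :
    (combHoroball G).dist (x, n) (x, n + k) ≤ k :=
  (SimpleGraph.dist_le (vertWalk G x n k)).trans (by rw [vertWalk_length])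

lemma horo_reach_vert (x : V) (n k : ℕ) :
    (combHoroball G).Reachable (x, n) (x, n + k) := ⟨vertWalk G x n k⟩

lemma horo_reach_zero {u v : V} (p : G.Walk u v) :
    (combHoroball G).Reachable (u, 0) (v, 0) := by
  induction p with
  | nil => exact SimpleGraph.Reachable.refl _
  | @cons x y z h p ih =>
      refine SimpleGraph.Reachable.trans ?_ ih
      exact (horo_adj_horiz G h.ne (by simpa using SimpleGraph.dist_eq_one_iff_adj.mpr h |>.le)).reachable

lemma horo_connected (hG : G.Connected) : (combHoroball G).Connected := by
  have hne : Nonempty V := hG.nonempty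
  constructor
  intro z z'
  obtain ⟨x, n⟩ := z
  obtain ⟨y, m⟩ := z'
  have h1 : (combHoroball G).Reachable (x, n) (x, 0) := by
    simpa using (horo_reach_vert G x 0 n).symm
  have h2 : (combHoroball G).Reachable (y, 0) (y, m) := by
    simpa using horo_reach_vert G y 0 m
  obtain ⟨p⟩ := hG x y
  exact (h1.trans (horo_reach_zero G p)).trans h2

lemma horo_dist_horiz (hG : G.Connected) {x y : V} (n k : ℕ) (h : G.dist x y ≤ 2 ^ (n + k)) :
    (combHoroball G).dist (x, n) (y, n) ≤ 2 * k + 1 := by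
  rcases eq_or_ne x y with rfl | hne
  · simp [SimpleGraph.dist_self]
  have hc := horo_connected G hG
  have hmid : (combHoroball G).dist (x, n + k) (y, n + k) ≤ 1 := by
    have : G.dist x y ≤ 2 ^ (n + k) := h
    exact (SimpleGraph.dist_eq_one_iff_adj.mpr (horo_adj_horiz G hne this)).le
  calc (combHoroball G).dist (x, n) (y, n)
      ≤ (combHoroball G).dist (x, n) (x, n + k) +
        (combHoroball G).dist (x, n + k) (y, n) := hc.dist_triangle
    _ ≤ k + ((combHoroball G).dist (x, n + k) (y, n + k) +
        (combHoroball G).dist (y, n + k) (y, n)) :=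
        add_le_add (horo_dist_vert G x n k) hc.dist_triangle
    _ ≤ k + (1 + k) := by
        refine add_le_add_right (add_le_add hmid ?_) _
        rw [SimpleGraph.dist_comm]
        exact horo_dist_vert G y n k
    _ = 2 * k + 1 := by ring

/- ### connectivity of `Hgr` -/

lemma hgr_adj_vert {v : V} {n : ℕ} (h : v ∈ net G (n + 1)) :
    (Hgr G).Adj ⟨(v, n), net_succ_subset G n h⟩ ⟨(v, n + 1), h⟩ := by
  refine ⟨?_, Or.inl (Or.inl ⟨rfl, (pmap_fix G h).symm⟩)⟩
  intro hcon
  have := congrArg (fun a => (Subtype.val a).2) hcon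
  simp at this

lemma hgr_adj_up {v : V} {n : ℕ} (h : v ∈ net G n) :
    (Hgr G).Adj ⟨(v, n), h⟩ ⟨(pmap G n v, n + 1), pmap_mem G h⟩ := by
  refine ⟨?_, Or.inl (Or.inl ⟨rfl, rfl⟩)⟩
  intro hcon
  have := congrArg (fun a => (Subtype.val a).2) hcon
  simp at this

lemma hgr_adj_zero {u v : V} (h : G.Adj u v) :
    (Hgr G).Adj ⟨(u, 0), Set.mem_univ u⟩ ⟨(v, 0), Set.mem_univ v⟩ := by
  refine ⟨?_, Or.inl (Or.inr ⟨rfl, Or.inl ⟨rfl, h⟩⟩)⟩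
  intro hcon
  have := congrArg (fun a => (Subtype.val a).1) hcon
  exact h.ne this

lemma hgr_adj_horiz {u v : V} {n : ℕ} (hu : u ∈ net G (n + 1)) (hv : v ∈ net G (n + 1))
    (hne : u ≠ v) (h : G.dist u v ≤ 10 * 2 ^ (n + 1)) :
    (Hgr G).Adj ⟨(u, n + 1), hu⟩ ⟨(v, n + 1), hv⟩ := by
  refine ⟨?_, Or.inl (Or.inr ⟨rfl, Or.inr ⟨Nat.succ_le_succ (Nat.zero_le n), h⟩⟩)⟩
  intro hcon
  have := congrArg (fun a => (Subtype.val a).1) hcon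
  exact hne this

lemma hgr_reach_down (v : V) (n : ℕ) (h : v ∈ net G n) :
    (Hgr G).Reachable ⟨(v, n), h⟩ ⟨(v, 0), Set.mem_univ v⟩ := by
  induction n with
  | zero => exact SimpleGraph.Reachable.refl _
  | succ n ih =>
      exact SimpleGraph.Reachable.trans (hgr_adj_vert G h).symm.reachable
        (ih (net_succ_subset G n h))

lemma hgr_reach_zero {u v : V} (p : G.Walk u v) :
    (Hgr G).Reachable ⟨(u, 0), Set.mem_univ u⟩ ⟨(v, 0), Set.mem_univ v⟩ := by
  induction p with
  | nil => exact SimpleGraph.Reachable.refl _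
  | @cons x y z h p ih => exact SimpleGraph.Reachable.trans (hgr_adj_zero G h).reachable ih

lemma hgr_connected (hG : G.Connected) : (Hgr G).Connected := by
  have hne : Nonempty V := hG.nonempty
  obtain ⟨v0⟩ := hne
  haveI : Nonempty (Wt G) := ⟨⟨(v0, 0), Set.mem_univ v0⟩⟩
  constructor
  intro a b
  obtain ⟨⟨x, n⟩, hx⟩ := a
  obtain ⟨⟨y, m⟩, hy⟩ := b
  have h1 := hgr_reach_down G x n hx
  have h2 := hgr_reach_down G y m hy
  obtain ⟨p⟩ := hG x y
  exact (h1.trans (hgr_reach_zero G p)).trans h2.symm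

/- ### edge estimates -/

lemma pow_le_pow_right' {m n : ℕ} (h : m ≤ n) : (2:ℕ) ^ m ≤ 2 ^ n :=
  Nat.pow_le_pow_right (by norm_num) h

lemma hgr_edge_horo (hG : G.Connected) (a b : Wt G) (hadj : (Hgr G).Adj a b) :
    (combHoroball G).dist a.1 b.1 ≤ 9 := by
  have hc := horo_connected G hG
  obtain ⟨hne, hrel⟩ := hadj
  have key : ∀ x y : Wt G, x.1 ≠ y.1 →
      ((y.1.2 = x.1.2 + 1 ∧ y.1.1 = pmap G x.1.2 x.1.1) ∨
        (x.1.2 = y.1.2 ∧ ((x.1.2 = 0 ∧ G.Adj x.1.1 y.1.1) ∨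
          (1 ≤ x.1.2 ∧ G.dist x.1.1 y.1.1 ≤ 10 * 2 ^ x.1.2)))) →
      (combHoroball G).dist x.1 y.1 ≤ 9 := by
    rintro ⟨⟨x, n⟩, hx⟩ ⟨⟨y, m⟩, hy⟩ hne h
    simp only at *
    rcases h with ⟨hm, hyv⟩ | ⟨hm, h⟩
    · subst hm; subst hyv
      calc (combHoroball G).dist (x, n) (pmap G n x, n + 1)
          ≤ (combHoroball G).dist (x, n) (x, n + 1) +
            (combHoroball G).dist (x, n + 1) (pmap G n x, n + 1) := hc.dist_triangle
        _ ≤ 1 + (2 * 0 + 1) := by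
            refine add_le_add (horo_dist_vert G x n 1) ?_
            exact horo_dist_horiz G hG (n + 1) 0 (by simpa using pmap_dist G hx)
        _ ≤ 9 := by norm_num
    · subst hm
      rcases h with ⟨hn0, hadj⟩ | ⟨hn1, hd⟩
      · subst hn0
        have := horo_dist_horiz G hG 0 0
          (by simpa using (SimpleGraph.dist_eq_one_iff_adj.mpr hadj).le)
        omega
      · have hxy : x ≠ y := by
          intro hxy
          exact hne (by rw [hxy])
        have hpow : 10 * 2 ^ n ≤ 2 ^ (n + 4) := by
          have : (2:ℕ) ^ (n + 4) = 16 * 2 ^ n := by ring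
          omega
        have := horo_dist_horiz G hG n 4 (le_trans hd hpow)
        omega
  rcases hrel with h | h
  · exact key a b (fun hv => hne (Subtype.ext hv)) h
  · rw [SimpleGraph.dist_comm]
    exact key b a (fun hv => hne (Subtype.ext hv.symm)) h

/-- The coarse retraction from the horoball to the model. -/
noncomputable def psi (z : V × ℕ) : Wt G := ⟨(qmap G z.1 z.2, z.2), qmap_mem G z.1 z.2⟩

lemma horo_edge_hgr (hG : G.Connected) (z z' : V × ℕ) (hadj : (combHoroball G).Adj z z') :
    (Hgr G).dist (psi G z) (psi G z') ≤ 1 := by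
  obtain ⟨hne, hrel⟩ := hadj
  have key : ∀ w w' : V × ℕ,
      ((w.1 = w'.1 ∧ w'.2 = w.2 + 1) ∨ (w.2 = w'.2 ∧ G.dist w.1 w'.1 ≤ 2 ^ w.2)) →
      (Hgr G).dist (psi G w) (psi G w') ≤ 1 := by
    rintro ⟨x, n⟩ ⟨y, m⟩ h
    simp only at h
    rcases h with ⟨hxy, hm⟩ | ⟨hm, hd⟩
    · subst hxy; subst hm
      exact (SimpleGraph.dist_eq_one_iff_adj.mpr (hgr_adj_up G (qmap_mem G x n))).le
    · subst hm
      by_cases hq : qmap G x n = qmap G y n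
      · have : psi G (x, n) = psi G (y, n) := Subtype.ext (by simp [psi, hq])
        rw [this, SimpleGraph.dist_self]
        norm_num
      · match n with
        | 0 =>
            have hxy : x ≠ y := fun h => hq (by rw [h])
            have h1 : G.dist x y = 1 :=
              le_antisymm (by simpa using hd) (hG.pos_dist_of_ne hxy)
            exact (SimpleGraph.dist_eq_one_iff_adj.mpr
              (hgr_adj_zero G (SimpleGraph.dist_eq_one_iff_adj.mp h1))).le
        | n + 1 =>
            have hdq : G.dist (qmap G x (n + 1)) (qmap G y (n + 1)) ≤ 10 * 2 ^ (n + 1) := by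
              have t1 : G.dist (qmap G x (n + 1)) x ≤ 2 ^ (n + 2) := by
                rw [SimpleGraph.dist_comm]; exact qmap_dist G hG x (n + 1)
              have t2 : G.dist y (qmap G y (n + 1)) ≤ 2 ^ (n + 2) := qmap_dist G hG y (n + 1)
              have tri : G.dist (qmap G x (n + 1)) (qmap G y (n + 1)) ≤
                  G.dist (qmap G x (n + 1)) x + (G.dist x y + G.dist y (qmap G y (n + 1))) :=
                le_trans hG.dist_triangle (by gcongr; exact hG.dist_triangle)
              have hpow : (2:ℕ) ^ (n + 2) + (2 ^ (n + 1) + 2 ^ (n + 2)) ≤ 10 * 2 ^ (n + 1) := by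
                have e1 : (2:ℕ) ^ (n + 2) = 2 * 2 ^ (n + 1) := by ring
                omega
              exact le_trans tri (le_trans (by gcongr) hpow)
            exact (SimpleGraph.dist_eq_one_iff_adj.mpr
              (hgr_adj_horiz G (qmap_mem G x (n + 1)) (qmap_mem G y (n + 1)) hq hdq)).le
  rcases hrel with h | h
  · exact key z z' h
  · rw [SimpleGraph.dist_comm]
    exact key z' z h

lemma hgr_near_psi (hG : G.Connected) (a : Wt G) : (Hgr G).dist a (psi G a.1) ≤ 1 := by
  obtain ⟨⟨u, m⟩, hu⟩ := a
  match m with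
  | 0 =>
      have : psi G ((u, 0) : V × ℕ) = ⟨(u, 0), hu⟩ := Subtype.ext rfl
      rw [this, show (Hgr G).dist (⟨(u, 0), hu⟩ : Wt G) ⟨(u, 0), hu⟩ = 0 from SimpleGraph.dist_self]
      norm_num
  | m + 1 =>
      by_cases hq : qmap G u (m + 1) = u
      · have : psi G ((u, m + 1) : V × ℕ) = ⟨(u, m + 1), hu⟩ := Subtype.ext (by simp [psi, hq])
        rw [this, show (Hgr G).dist (⟨(u, m + 1), hu⟩ : Wt G) ⟨(u, m + 1), hu⟩ = 0 from
          SimpleGraph.dist_self]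
        norm_num
      · refine (SimpleGraph.dist_eq_one_iff_adj.mpr ?_).le
        have hd : G.dist u (qmap G u (m + 1)) ≤ 10 * 2 ^ (m + 1) := by
          have := qmap_dist G hG u (m + 1)
          have e1 : (2:ℕ) ^ (m + 2) = 2 * 2 ^ (m + 1) := by ring
          omega
        exact hgr_adj_horiz G hu (qmap_mem G u (m + 1)) (fun h => hq h.symm) hd

lemma distA (hG : G.Connected) (a b : Wt G) :
    (combHoroball G).dist a.1 b.1 ≤ 9 * (Hgr G).dist a b :=
  dist_map_le (hgr_connected G hG) (horo_connected G hG) (fun a => a.1) 9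
    (hgr_edge_horo G hG) a b

lemma distB (hG : G.Connected) (a b : Wt G) :
    (Hgr G).dist a b ≤ (combHoroball G).dist a.1 b.1 + 2 := by
  have hc := hgr_connected G hG
  have hmid : (Hgr G).dist (psi G a.1) (psi G b.1) ≤ (combHoroball G).dist a.1 b.1 := by
    have := dist_map_le (horo_connected G hG) hc (psi G) 1 (horo_edge_hgr G hG) a.1 b.1
    simpa using this
  calc (Hgr G).dist a b
      ≤ (Hgr G).dist a (psi G a.1) + (Hgr G).dist (psi G a.1) b := hc.dist_triangle
    _ ≤ 1 + ((Hgr G).dist (psi G a.1) (psi G b.1) + (Hgr G).dist (psi G b.1) b) :=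
        add_le_add (hgr_near_psi G hG a) hc.dist_triangle
    _ ≤ 1 + ((combHoroball G).dist a.1 b.1 + 1) := by
        refine add_le_add_right (add_le_add hmid ?_) _
        rw [SimpleGraph.dist_comm]
        exact hgr_near_psi G hG b
    _ = (combHoroball G).dist a.1 b.1 + 2 := by ring

lemma horo_near_psi (hG : G.Connected) (z : V × ℕ) :
    (combHoroball G).dist z (psi G z).1 ≤ 3 := by
  obtain ⟨x, n⟩ := z
  have : (psi G ((x, n) : V × ℕ)).1 = (qmap G x n, n) := rfl
  rw [this]
  have := horo_dist_horiz G hG n 1 (by simpa using qmap_dist G hG x n)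
  omega

/- ### counting -/

section Counting

variable {c C : ℝ} {d : ℕ}

lemma ball_finite (hc : 0 < c)
    (hgrowth : ∀ (v : V) (r : ℕ), 1 ≤ r →
      c * (r : ℝ) ^ d ≤ ({u | G.dist v u ≤ r} : Set V).ncard ∧
      (({u | G.dist v u ≤ r} : Set V).ncard : ℝ) ≤ C * (r : ℝ) ^ d)
    (v : V) (r : ℕ) (hr : 1 ≤ r) : ({u | G.dist v u ≤ r} : Set V).Finite := by
  by_contra h
  have hinf : ({u | G.dist v u ≤ r} : Set V).Infinite := h
  have h0 := (hgrowth v r hr).1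
  rw [hinf.ncard] at h0
  have hrpos : (0:ℝ) < (r:ℝ) := by exact_mod_cast hr
  have : (0:ℝ) < c * (r:ℝ) ^ d := by positivity
  simp only [Nat.cast_zero] at h0
  linarith

lemma crude_bound (hc : 0 < c)
    (hgrowth : ∀ (v : V) (r : ℕ), 1 ≤ r →
      c * (r : ℝ) ^ d ≤ ({u | G.dist v u ≤ r} : Set V).ncard ∧
      (({u | G.dist v u ≤ r} : Set V).ncard : ℝ) ≤ C * (r : ℝ) ^ d)
    (v : V) (r : ℕ) (hr : 1 ≤ r) (T : Set V) (hT : T ⊆ {u | G.dist v u ≤ r}) :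
    T.Finite ∧ (T.ncard : ℝ) ≤ C * (r : ℝ) ^ d := by
  have hfin := ball_finite G hc hgrowth v r hr
  refine ⟨hfin.subset hT, ?_⟩
  have h1 : T.ncard ≤ ({u | G.dist v u ≤ r} : Set V).ncard := Set.ncard_le_ncard hT hfin
  exact le_trans (by exact_mod_cast h1) (hgrowth v r hr).2

lemma packing_bound (hG : G.Connected) (hc : 0 < c)
    (hgrowth : ∀ (v : V) (r : ℕ), 1 ≤ r →
      c * (r : ℝ) ^ d ≤ ({u | G.dist v u ≤ r} : Set V).ncard ∧
      (({u | G.dist v u ≤ r} : Set V).ncard : ℝ) ≤ C * (r : ℝ) ^ d)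
    (v : V) (m : ℕ) (T : Set V) (hT : T ⊆ net G (m + 1))
    (hball : ∀ w ∈ T, G.dist v w ≤ 16 * 2 ^ (m + 1)) :
    T.Finite ∧ (T.ncard : ℝ) ≤ (C / c) * 64 ^ d := by
  have h2m : (1:ℕ) ≤ 2 ^ m := Nat.one_le_two_pow
  have h2m6 : (1:ℕ) ≤ 2 ^ (m + 6) := Nat.one_le_two_pow
  have hBigFin := ball_finite G hc hgrowth v (2 ^ (m + 6)) h2m6
  have hpows : 16 * 2 ^ (m + 1) + 2 ^ m ≤ 2 ^ (m + 6) := by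
    have e1 : (2:ℕ) ^ (m + 1) = 2 * 2 ^ m := by ring
    have e2 : (2:ℕ) ^ (m + 6) = 64 * 2 ^ m := by ring
    omega
  have hTB : T ⊆ {u | G.dist v u ≤ 2 ^ (m + 6)} := by
    intro w hw
    have := hball w hw
    simp only [Set.mem_setOf_eq]
    omega
  have hTfin : T.Finite := hBigFin.subset hTB
  -- small balls
  have hsbFin : ∀ w : V, ({u | G.dist w u ≤ 2 ^ m} : Set V).Finite := fun w =>
    ball_finite G hc hgrowth w (2 ^ m) h2m
  set Tfin := hTfin.toFinset with hTfinDef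
  set Bfin := hBigFin.toFinset with hBfinDef
  set sb : V → Finset V := fun w => (hsbFin w).toFinset with hsbDef
  have hsub : ∀ w ∈ Tfin, sb w ⊆ Bfin := by
    intro w hw u hu
    simp only [hsbDef, Set.Finite.mem_toFinset, Set.mem_setOf_eq] at hu
    simp only [hBfinDef, Set.Finite.mem_toFinset, Set.mem_setOf_eq]
    have hw' : w ∈ T := by simpa [hTfinDef, Set.Finite.mem_toFinset] using hw
    have h1 := hball w hw'
    have h2 : G.dist v u ≤ G.dist v w + G.dist w u := hG.dist_triangle
    omega
  have hdisj : ∀ w ∈ Tfin, ∀ w' ∈ Tfin, w ≠ w' → Disjoint (sb w) (sb w') := by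
    intro w hw w' hw' hne
    rw [Finset.disjoint_left]
    intro u hu hu'
    simp only [hsbDef, Set.Finite.mem_toFinset, Set.mem_setOf_eq] at hu hu'
    have hw1 : w ∈ T := by simpa [hTfinDef, Set.Finite.mem_toFinset] using hw
    have hw2 : w' ∈ T := by simpa [hTfinDef, Set.Finite.mem_toFinset] using hw'
    have hsep := net_pairwise G m (hT hw1) (hT hw2) hne
    have htri : G.dist w w' ≤ G.dist w u + G.dist u w' := hG.dist_triangle
    have : G.dist u w' = G.dist w' u := SimpleGraph.dist_comm
    have e1 : (2:ℕ) ^ (m + 1) = 2 * 2 ^ m := by ring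
    omega
  have hcard : ∑ w ∈ Tfin, (sb w).card = (Tfin.biUnion sb).card :=
    (Finset.card_biUnion hdisj).symm
  have hbig : (Tfin.biUnion sb).card ≤ Bfin.card := by
    apply Finset.card_le_card
    intro u hu
    rw [Finset.mem_biUnion] at hu
    obtain ⟨w, hw, hu⟩ := hu
    exact hsub w hw hu
  have hlow : ∀ w ∈ Tfin, c * ((2:ℝ) ^ m) ^ d ≤ ((sb w).card : ℝ) := by
    intro w _
    have := (hgrowth w (2 ^ m) h2m).1
    have hcardeq : ({u | G.dist w u ≤ 2 ^ m} : Set V).ncard = (sb w).card :=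
      Set.ncard_eq_toFinset_card _ (hsbFin w)
    rw [hcardeq] at this
    convert this using 3
    push_cast
    ring
  have hsum : (Tfin.card : ℝ) * (c * ((2:ℝ) ^ m) ^ d) ≤ ∑ w ∈ Tfin, ((sb w).card : ℝ) := by
    have := Finset.card_nsmul_le_sum Tfin (fun w => ((sb w).card : ℝ))
      (c * ((2:ℝ) ^ m) ^ d) hlow
    simpa [nsmul_eq_mul] using this
  have hup : (∑ w ∈ Tfin, ((sb w).card : ℝ)) ≤ C * ((2:ℝ) ^ (m + 6)) ^ d := by
    have h1 : ∑ w ∈ Tfin, ((sb w).card : ℝ) = ((Tfin.biUnion sb).card : ℝ) := by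
      rw [← hcard]; push_cast; ring
    have h2 : ((Bfin.card : ℕ) : ℝ) ≤ C * ((2:ℝ) ^ (m + 6)) ^ d := by
      have := (hgrowth v (2 ^ (m + 6)) h2m6).2
      rw [Set.ncard_eq_toFinset_card _ hBigFin] at this
      convert this using 3
      push_cast
      ring
    rw [h1]
    exact le_trans (by exact_mod_cast hbig) h2
  have hP : (0:ℝ) < ((2:ℝ) ^ m) ^ d := by positivity
  have key : (Tfin.card : ℝ) * (c * ((2:ℝ) ^ m) ^ d) ≤ C * ((2:ℝ) ^ m) ^ d * 64 ^ d := by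
    refine le_trans (hsum.trans hup) (le_of_eq ?_)
    rw [pow_add, mul_pow]
    norm_num
    ring
  have hcardT : (T.ncard : ℝ) = (Tfin.card : ℝ) := by
    rw [Set.ncard_eq_toFinset_card _ hTfin]
  refine ⟨hTfin, ?_⟩
  rw [hcardT, div_mul_eq_mul_div, le_div_iff₀ hc]
  nlinarith [key, hP, hc]

/-- Counting a subset of `Wt G` living at a single level via its vertex projection. -/
lemma count_level (k : ℕ) (P : Set (Wt G)) (hP : ∀ b ∈ P, b.1.2 = k)
    (T : Set V) (hT : ∀ b ∈ P, b.1.1 ∈ T) (hTfin : T.Finite) {K : ℝ}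
    (hK : (T.ncard : ℝ) ≤ K) : P.Finite ∧ (P.ncard : ℝ) ≤ K := by
  have hinj : Set.InjOn (fun b : Wt G => b.1.1) P := by
    intro b hb b' hb' h
    apply Subtype.ext
    apply Prod.ext h
    rw [hP b hb, hP b' hb']
  have himg : (fun b : Wt G => b.1.1) '' P ⊆ T := by
    rintro _ ⟨b, hb, rfl⟩
    exact hT b hb
  have himfin : ((fun b : Wt G => b.1.1) '' P).Finite := hTfin.subset himg
  have hPfin : P.Finite := Set.Finite.of_finite_image himfin hinj
  refine ⟨hPfin, ?_⟩
  have h1 : P.ncard = ((fun b : Wt G => b.1.1) '' P).ncard :=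
    (Set.ncard_image_of_injOn hinj).symm
  have h2 : ((fun b : Wt G => b.1.1) '' P).ncard ≤ T.ncard :=
    Set.ncard_le_ncard himg hTfin
  have : P.ncard ≤ T.ncard := h1 ▸ h2
  exact le_trans (by exact_mod_cast this) hK

end Counting

/- ### bounded valence -/

lemma hgr_adj_cases {w b : Wt G} (h : (Hgr G).Adj w b) :
    (b.1.2 = w.1.2 + 1 ∧ b.1.1 = pmap G w.1.2 w.1.1) ∨
    (w.1.2 = b.1.2 + 1 ∧ w.1.1 = pmap G b.1.2 b.1.1) ∨
    (b.1.2 = w.1.2 ∧ G.dist w.1.1 b.1.1 ≤ 10 * 2 ^ w.1.2) := by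
  obtain ⟨hne, h | h⟩ := h
  · rcases h with h | ⟨hlev, h⟩
    · exact Or.inl h
    · refine Or.inr (Or.inr ⟨hlev.symm, ?_⟩)
      rcases h with ⟨h0, hadj⟩ | ⟨_, hd⟩
      · have h1 : G.dist w.1.1 b.1.1 = 1 := SimpleGraph.dist_eq_one_iff_adj.mpr hadj
        have h2 : (0:ℕ) < 10 * 2 ^ w.1.2 := by positivity
        omega
      · exact hd
  · rcases h with h | ⟨hlev, h⟩
    · exact Or.inr (Or.inl h)
    · refine Or.inr (Or.inr ⟨hlev, ?_⟩)
      rw [SimpleGraph.dist_comm, ← hlev]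
      rcases h with ⟨h0, hadj⟩ | ⟨_, hd⟩
      · have h1 : G.dist b.1.1 w.1.1 = 1 := SimpleGraph.dist_eq_one_iff_adj.mpr hadj
        have h2 : (0:ℕ) < 10 * 2 ^ b.1.2 := by positivity
        omega
      · exact hd

section Valence

variable {c C : ℝ} {d : ℕ}

/-- Uniform bound on net points in balls: if `T` consists of points of `net G k` at distance
at most `R ≤ 16·2^k` from `v`, then `T` has uniformly boundedly many points. -/
lemma net_ball_bound (hG : G.Connected) (hc : 0 < c)
    (hgrowth : ∀ (v : V) (r : ℕ), 1 ≤ r →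
      c * (r : ℝ) ^ d ≤ ({u | G.dist v u ≤ r} : Set V).ncard ∧
      (({u | G.dist v u ≤ r} : Set V).ncard : ℝ) ≤ C * (r : ℝ) ^ d)
    (v : V) (k R : ℕ) (hR : R ≤ 16 * 2 ^ k)
    (T : Set V) (hT : T ⊆ {u | u ∈ net G k ∧ G.dist v u ≤ R}) :
    T.Finite ∧ (T.ncard : ℝ) ≤ max ((C / c) * 64 ^ d) (C * (32:ℝ) ^ d) := by
  match k with
  | 0 =>
      have hsub2 : T ⊆ {u | G.dist v u ≤ 32} := by
        intro u hu
        have h1 := (hT hu).2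
        have h2 : (2:ℕ) ^ 0 = 1 := by norm_num
        simp only [Set.mem_setOf_eq]
        omega
      obtain ⟨h1, h2⟩ := crude_bound G hc hgrowth v 32 (by norm_num) T hsub2
      refine ⟨h1, le_max_of_le_right ?_⟩
      exact le_trans h2 (by norm_num)
  | j + 1 =>
      have hsub2 : T ⊆ net G (j + 1) := fun u hu => (hT hu).1
      have hball : ∀ u ∈ T, G.dist v u ≤ 16 * 2 ^ (j + 1) := by
        intro u hu
        have := (hT hu).2
        omega
      obtain ⟨h1, h2⟩ := packing_bound G hG hc hgrowth v j T hsub2 hball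
      exact ⟨h1, le_max_of_le_left h2⟩

lemma hgr_bounded_valence (hG : G.Connected) (hc : 0 < c)
    (hgrowth : ∀ (v : V) (r : ℕ), 1 ≤ r →
      c * (r : ℝ) ^ d ≤ ({u | G.dist v u ≤ r} : Set V).ncard ∧
      (({u | G.dist v u ≤ r} : Set V).ncard : ℝ) ≤ C * (r : ℝ) ^ d) :
    BoundedValence (Hgr G) := by
  set Kr : ℝ := max ((C / c) * 64 ^ d) (C * (32:ℝ) ^ d) with hKrDef
  set Kn : ℕ := ⌈Kr⌉₊ with hKnDef
  have hcast : ∀ (P : Set (Wt G)), (P.ncard : ℝ) ≤ Kr → P.ncard ≤ Kn := by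
    intro P h
    have : (P.ncard : ℝ) ≤ (Kn : ℝ) := le_trans h (Nat.le_ceil Kr)
    exact_mod_cast this
  refine ⟨1 + Kn + Kn, ?_⟩
  rintro ⟨⟨v, n⟩, hv⟩
  set w : Wt G := ⟨(v, n), hv⟩ with hwDef
  set U : Set (Wt G) := {b | b.1 = (pmap G n v, n + 1)} with hUDef
  set D : Set (Wt G) := {b | b.1.2 + 1 = n ∧ v = pmap G b.1.2 b.1.1} with hDDef
  set Hz : Set (Wt G) := {b | b.1.2 = n ∧ G.dist v b.1.1 ≤ 10 * 2 ^ n} with hHzDef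
  have hsub : (Hgr G).neighborSet w ⊆ U ∪ D ∪ Hz := by
    intro b hb
    have hadj : (Hgr G).Adj w b := hb
    rcases hgr_adj_cases G hadj with ⟨h1, h2⟩ | ⟨h1, h2⟩ | ⟨h1, h2⟩
    · exact Or.inl (Or.inl (by
        simp only [hUDef, Set.mem_setOf_eq]
        exact Prod.ext h2 h1))
    · exact Or.inl (Or.inr ⟨h1.symm ▸ rfl, h2⟩)
    · exact Or.inr ⟨h1, h2⟩
  -- the up-set
  have hU : U.Finite ∧ U.ncard ≤ 1 := by
    have hss : U ⊆ {(⟨(pmap G n v, n + 1), pmap_mem G hv⟩ : Wt G)} := by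
      intro b hb
      exact Subtype.ext hb
    exact ⟨(Set.finite_singleton _).subset hss,
      le_trans (Set.ncard_le_ncard hss (Set.finite_singleton _)) (le_of_eq (Set.ncard_singleton _))⟩
  -- the down-set
  have hD : D.Finite ∧ (D.ncard : ℝ) ≤ Kr := by
    have hlev : ∀ b ∈ D, b.1.2 = n - 1 := by
      rintro b ⟨hb1, _⟩
      omega
    have hT : ∀ b ∈ D, b.1.1 ∈ {u | u ∈ net G (n - 1) ∧ G.dist v u ≤ 2 ^ n} := by
      rintro b ⟨hb1, hb2⟩
      have hmem : b.1.1 ∈ net G (n - 1) := by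
        have hb := b.2
        have : b.1.2 = n - 1 := by omega
        rwa [this] at hb
      refine ⟨hmem, ?_⟩
      have hd := pmap_dist G b.2
      rw [← hb2] at hd
      rw [SimpleGraph.dist_comm]
      have : b.1.2 + 1 = n := hb1
      rwa [this] at hd
    have hRle : 2 ^ n ≤ 16 * 2 ^ (n - 1) := by
      rcases n with _ | m
      · norm_num
      · have e1 : (2:ℕ) ^ (m + 1) = 2 * 2 ^ m := by ring
        simp only [Nat.add_sub_cancel]
        omega
    obtain ⟨hTfin, hTb⟩ := net_ball_bound G hG hc hgrowth v (n - 1) (2 ^ n) hRle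
      {u | u ∈ net G (n - 1) ∧ G.dist v u ≤ 2 ^ n} le_rfl
    exact count_level G (n - 1) D hlev _ hT hTfin hTb
  -- the horizontal set
  have hHz : Hz.Finite ∧ (Hz.ncard : ℝ) ≤ Kr := by
    have hlev : ∀ b ∈ Hz, b.1.2 = n := fun b hb => hb.1
    have hT : ∀ b ∈ Hz, b.1.1 ∈ {u | u ∈ net G n ∧ G.dist v u ≤ 10 * 2 ^ n} := by
      rintro b ⟨hb1, hb2⟩
      have hmem : b.1.1 ∈ net G n := by
        have hb := b.2
        rwa [hb1] at hb
      exact ⟨hmem, hb2⟩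
    have hRle : 10 * 2 ^ n ≤ 16 * 2 ^ n := by omega
    obtain ⟨hTfin, hTb⟩ := net_ball_bound G hG hc hgrowth v n (10 * 2 ^ n) hRle
      {u | u ∈ net G n ∧ G.dist v u ≤ 10 * 2 ^ n} le_rfl
    exact count_level G n Hz hlev _ hT hTfin hTb
  have hfin : ((Hgr G).neighborSet w).Finite :=
    ((hU.1.union hD.1).union hHz.1).subset hsub
  refine ⟨hfin, ?_⟩
  calc ((Hgr G).neighborSet w).ncard ≤ (U ∪ D ∪ Hz).ncard :=
        Set.ncard_le_ncard hsub ((hU.1.union hD.1).union hHz.1)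
    _ ≤ (U ∪ D).ncard + Hz.ncard := Set.ncard_union_le _ _
    _ ≤ U.ncard + D.ncard + Hz.ncard := by
        have := Set.ncard_union_le U D
        omega
    _ ≤ 1 + Kn + Kn := by
        have h1 := hU.2
        have h2 := hcast D hD.2
        have h3 := hcast Hz hHz.2
        omega

end Valence

end HoroAux


open HoroAux in
/-- **Lemma (after Dahmani–Yaman).** Let `Γ` be a connected combinatorial graph of uniform
polynomial growth.  Then there is a bounded-valence graph `H_bv(Γ)` containing `Γ` as a
subgraph such that the identity map on `Γ` extends to a quasi-isometry from `H_bv(Γ)` to the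
combinatorial horoball based on `Γ`. -/
theorem exists_bounded_valence_horoball_model
    {V : Type u} (G : SimpleGraph V) (hG : G.Connected)
    (c C : ℝ) (d : ℕ) (hc : 0 < c) (hcC : c < C)
    (hgrowth : ∀ (v : V) (r : ℕ), 1 ≤ r →
      c * (r : ℝ) ^ d ≤ ({u | G.dist v u ≤ r} : Set V).ncard ∧
      (({u | G.dist v u ≤ r} : Set V).ncard : ℝ) ≤ C * (r : ℝ) ^ d) :
    ∃ (W : Type u) (H : SimpleGraph W) (ι : V → W),
      Function.Injective ι ∧
      (∀ u v : V, G.Adj u v ↔ H.Adj (ι u) (ι v)) ∧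
      BoundedValence H ∧
      ∃ (f : W → V × ℕ) (lam ε : ℝ), 1 ≤ lam ∧ 0 ≤ ε ∧
        (∀ v : V, f (ι v) = (v, 0)) ∧
        (∀ a b : W,
          ((combHoroball G).dist (f a) (f b) : ℝ) ≤ lam * (H.dist a b : ℝ) + ε ∧
          lam⁻¹ * (H.dist a b : ℝ) - ε ≤ ((combHoroball G).dist (f a) (f b) : ℝ)) ∧
        ∀ z : V × ℕ, ∃ a : W, ((combHoroball G).dist z (f a) : ℝ) ≤ ε := by
  classical
  refine ⟨Wt G, Hgr G, fun v => ⟨(v, 0), Set.mem_univ v⟩, ?_, ?_, ?_, ?_⟩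
  · intro a b h
    simpa using congrArg (fun x => (Subtype.val x).1) h
  · intro u v
    constructor
    · intro h
      exact hgr_adj_zero G h
    · rintro ⟨hne, h | h⟩
      · rcases h with ⟨h1, _⟩ | ⟨_, ⟨_, hadj⟩ | ⟨h1, _⟩⟩
        · exact absurd h1 (by simp)
        · exact hadj
        · exact absurd h1 (by simp)
      · rcases h with ⟨h1, _⟩ | ⟨_, ⟨_, hadj⟩ | ⟨h1, _⟩⟩
        · exact absurd h1 (by simp)
        · exact hadj.symm
        · exact absurd h1 (by simp)
  · exact hgr_bounded_valence G hG hc hgrowth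
  · refine ⟨fun a => a.1, 9, 3, by norm_num, by norm_num, fun v => rfl, ?_, ?_⟩
    · intro a b
      have hA := distA G hG a b
      have hA' : ((combHoroball G).dist a.1 b.1 : ℝ) ≤ 9 * ((Hgr G).dist a b : ℝ) := by
        exact_mod_cast hA
      have hB := distB G hG a b
      have hB' : ((Hgr G).dist a b : ℝ) ≤ ((combHoroball G).dist a.1 b.1 : ℝ) + 2 := by
        exact_mod_cast hB
      have h0 : (0:ℝ) ≤ ((Hgr G).dist a b : ℝ) := Nat.cast_nonneg _
      have h00 : (0:ℝ) ≤ ((combHoroball G).dist a.1 b.1 : ℝ) := Nat.cast_nonneg _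
      constructor
      · linarith
      · have h9 : ((9:ℝ))⁻¹ * ((Hgr G).dist a b : ℝ) ≤ ((Hgr G).dist a b : ℝ) := by
          apply mul_le_of_le_one_left h0
          norm_num
        linarith
    · intro z
      refine ⟨psi G z, ?_⟩
      have := horo_near_psi G hG z
      have h' : ((combHoroball G).dist z (psi G z).1 : ℝ) ≤ 3 := by exact_mod_cast this
      exact h'
end

section
/- Let Ξ be a connected graph, Γ ⊂ Ξ a connected subgraph, a ∈ Γ, and Q > 0. Suppose there is a Q-deformation retraction (fᵢ) of Ξ onto Γ with stable map f such that d_Γ(f(b₁), f(b₂)) ≤ Q whenever d_Ξ(b₁,b₂) ≤ 1, and suppose there exists D > 2Q + 2 such that all loops in Γ of length at most Q·D represent the trivial element (up to conjugacy) of π₁^D(Γ, a). Then the inclusion Γ ↪ Ξ induces an isomorphism π₁^D(Γ, a) → π₁^D(Ξ, a). -/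
open SimpleGraph

variable {V : Type*}

/-- `D`-homotopy of walks (see Definition of `π₁^D`): generated by backtracking moves and by
filling edge-loops of length at most `D`, congruently w.r.t. concatenation. -/
inductive DHomotopic (G : SimpleGraph V) (D : ℝ) : ∀ {u v : V}, G.Walk u v → G.Walk u v → Prop
  | refl {u v : V} (p : G.Walk u v) : DHomotopic G D p p
  | symm {u v : V} {p q : G.Walk u v} : DHomotopic G D p q → DHomotopic G D q p
  | trans {u v : V} {p q r : G.Walk u v} :
      DHomotopic G D p q → DHomotopic G D q r → DHomotopic G D p r
  | backtrack {u v : V} (h : G.Adj u v) :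
      DHomotopic G D (Walk.nil : G.Walk u u) (Walk.cons h (Walk.cons h.symm Walk.nil))
  | small {u v : V} (p q : G.Walk u v) :
      ((p.append q.reverse).length : ℝ) ≤ D → DHomotopic G D p q
  | congr {u v w x : V} {p p' : G.Walk v w} (r : G.Walk u v) (s : G.Walk w x) :
      DHomotopic G D p p' →
      DHomotopic G D (r.append (p.append s)) (r.append (p'.append s))

/-- The setoid of `D`-homotopy on closed walks based at `a`; its quotient is `π₁^D(G, a)`. -/
def dHomSetoid (G : SimpleGraph V) (D : ℝ) (a : V) : Setoid (G.Walk a a) :=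
  ⟨DHomotopic G D, ⟨fun p => .refl p, .symm, .trans⟩⟩

/-- `π₁^D(G, a)`, as the set of `D`-homotopy classes of closed walks based at `a`
(the group operation being induced by concatenation of walks). -/
def CoarsePi1 (G : SimpleGraph V) (D : ℝ) (a : V) := Quotient (dHomSetoid G D a)

namespace DHAux

variable {G : SimpleGraph V} {D : ℝ}

lemma dh_of_eq {u v : V} {p q : G.Walk u v} (h : p = q) : DHomotopic G D p q :=
  h ▸ DHomotopic.refl p

lemma dh_appendLeft {u v w : V} {p p' : G.Walk u v} (s : G.Walk v w)
    (h : DHomotopic G D p p') : DHomotopic G D (p.append s) (p'.append s) := by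
  simpa using DHomotopic.congr Walk.nil s h

lemma dh_appendRight {u v w : V} (r : G.Walk u v) {p p' : G.Walk v w}
    (h : DHomotopic G D p p') : DHomotopic G D (r.append p) (r.append p') := by
  simpa using DHomotopic.congr r Walk.nil h

lemma dh_cancel_self {u v : V} (p : G.Walk u v) :
    DHomotopic G D (p.append p.reverse) Walk.nil := by
  induction p with
  | nil => exact dh_of_eq rfl
  | cons h p ih =>
    refine DHomotopic.trans ?_ (DHomotopic.symm (DHomotopic.backtrack h))
    have step := DHomotopic.congr (Walk.cons h Walk.nil) (Walk.cons h.symm Walk.nil) ih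
    simpa [Walk.cons_append, Walk.nil_append, Walk.reverse_cons, Walk.append_assoc] using step

lemma dh_cancel_self' {u v : V} (p : G.Walk u v) :
    DHomotopic G D (p.reverse.append p) Walk.nil := by
  simpa using dh_cancel_self (G := G) (D := D) p.reverse

lemma dh_of_append_reverse {u v : V} {p q : G.Walk u v}
    (h : DHomotopic G D (p.append q.reverse) Walk.nil) : DHomotopic G D p q := by
  have h1 : DHomotopic G D p (p.append (q.reverse.append q)) :=
    (dh_of_eq (Walk.append_nil p).symm).trans
      (dh_appendRight p (DHomotopic.symm (dh_cancel_self' q)))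
  refine h1.trans ((dh_of_eq (Walk.append_assoc p q.reverse q)).trans ?_)
  exact (dh_appendLeft q h).trans (dh_of_eq (Walk.nil_append q))

lemma dh_cancel_left {u v w : V} (r : G.Walk u v) {p q : G.Walk v w}
    (h : DHomotopic G D (r.append p) (r.append q)) : DHomotopic G D p q := by
  have h1 : DHomotopic G D p (r.reverse.append (r.append p)) :=
    (dh_of_eq (Walk.nil_append p).symm).trans
      ((dh_appendLeft p (DHomotopic.symm (dh_cancel_self' r))).trans
        (dh_of_eq (Walk.append_assoc r.reverse r p).symm))
  refine h1.trans ((dh_appendRight r.reverse h).trans ?_)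
  refine (dh_of_eq (Walk.append_assoc r.reverse r q)).trans ?_
  exact (dh_appendLeft q (dh_cancel_self' r)).trans (dh_of_eq (Walk.nil_append q))

lemma dh_cancel_right {u v w : V} (s : G.Walk v w) {p q : G.Walk u v}
    (h : DHomotopic G D (p.append s) (q.append s)) : DHomotopic G D p q := by
  have h1 : DHomotopic G D p ((p.append s).append s.reverse) :=
    (dh_of_eq (Walk.append_nil p).symm).trans
      ((dh_appendRight p (DHomotopic.symm (dh_cancel_self s))).trans
        (dh_of_eq (Walk.append_assoc p s s.reverse)))
  refine h1.trans ((dh_appendLeft s.reverse h).trans ?_)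
  refine (dh_of_eq (Walk.append_assoc q s s.reverse).symm).trans ?_
  exact (dh_appendRight q (dh_cancel_self s)).trans (dh_of_eq (Walk.append_nil q))

lemma dh_map {W : Type*} {G' : SimpleGraph W} (φ : G →g G') {u v : V} {p q : G.Walk u v}
    (h : DHomotopic G D p q) : DHomotopic G' D (p.map φ) (q.map φ) := by
  induction h with
  | refl p => exact DHomotopic.refl _
  | symm _ ih => exact ih.symm
  | trans _ _ ih1 ih2 => exact ih1.trans ih2
  | backtrack hadj => simpa using DHomotopic.backtrack (φ.map_adj hadj)
  | small p q hlen =>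
    refine DHomotopic.small _ _ ?_
    have : ((p.map φ).append (q.map φ).reverse).length = (p.append q.reverse).length := by
      rw [Walk.reverse_map, ← Walk.map_append, Walk.length_map]
    rw [this]; exact hlen
  | congr r s _ ih =>
    simpa [Walk.map_append] using DHomotopic.congr (r.map φ) (s.map φ) ih

lemma dh_copy {u v u' v' : V} (hu : u = u') (hv : v = v') {p q : G.Walk u v}
    (h : DHomotopic G D p q) : DHomotopic G D (p.copy hu hv) (q.copy hu hv) := by
  subst hu; subst hv; simpa using h

lemma dh_copy_square {x x' b : V} (ex : x = b) (ex' : x' = b)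
    (P : G.Walk x x) (P' : G.Walk x' x') (G1 : G.Walk x x') (hG1 : G1.length = 0)
    (h : DHomotopic G D (P.append G1) (G1.append P')) :
    DHomotopic G D (P.copy ex ex) (P'.copy ex' ex') := by
  subst ex; subst ex'
  rw [Walk.length_eq_zero_iff] at hG1
  rw [Walk.nil_iff_eq_nil] at hG1
  rw [hG1] at h
  simpa using h

end DHAux

namespace DHAux

variable {G : SimpleGraph V} {D : ℝ}

/-- A chosen geodesic between two vertices of a connected graph. -/
noncomputable def geo (hG : G.Connected) (u v : V) : G.Walk u v :=
  (hG.exists_walk_length_eq_dist u v).choose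

lemma geo_length (hG : G.Connected) (u v : V) : (geo hG u v).length = G.dist u v :=
  (hG.exists_walk_length_eq_dist u v).choose_spec

variable {W : Type*} {G' : SimpleGraph W}

/-- Push a walk of `G` forward along an arbitrary map `g : V → W`, connecting consecutive
image vertices by chosen geodesics in the connected graph `G'`. -/
noncomputable def pushWalk (hG' : G'.Connected) (g : V → W) :
    ∀ {u v : V}, G.Walk u v → G'.Walk (g u) (g v)
  | _, _, Walk.nil => Walk.nil
  | _, _, Walk.cons _ p => (geo hG' _ _).append (pushWalk hG' g p)

@[simp] lemma pushWalk_nil (hG' : G'.Connected) (g : V → W) {u : V} :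
    pushWalk (G := G) hG' g (Walk.nil : G.Walk u u) = Walk.nil := rfl

lemma pushWalk_cons (hG' : G'.Connected) (g : V → W) {u m v : V} (h : G.Adj u m)
    (p : G.Walk m v) :
    pushWalk hG' g (Walk.cons h p) = (geo hG' (g u) (g m)).append (pushWalk hG' g p) := rfl

lemma pushWalk_append (hG' : G'.Connected) (g : V → W) {u v w : V}
    (p : G.Walk u v) (q : G.Walk v w) :
    pushWalk hG' g (p.append q) = (pushWalk hG' g p).append (pushWalk hG' g q) := by
  induction p with
  | nil => rfl
  | cons h p ih =>
    rw [Walk.cons_append, pushWalk_cons, pushWalk_cons, ih, Walk.append_assoc]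

lemma pushWalk_length_le (hG' : G'.Connected) (g : V → W) {Q : ℝ} (hQ0 : 0 ≤ Q)
    (hg : ∀ x y : V, G.Adj x y → ((G'.dist (g x) (g y) : ℝ) ≤ Q))
    {u v : V} (p : G.Walk u v) :
    ((pushWalk hG' g p).length : ℝ) ≤ Q * p.length := by
  induction p with
  | nil => simp
  | cons h p ih =>
    rw [pushWalk_cons]
    have h1 := hg _ _ h
    rw [Walk.length_append]
    push_cast
    rw [geo_length]
    have : Q * ((Walk.cons h p).length : ℝ) = Q * p.length + Q := by
      rw [Walk.length_cons]; push_cast; ring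
    rw [this]
    linarith

end DHAux

namespace DHAux

variable {G : SimpleGraph V} {D : ℝ}

lemma adj_cast_dist_le_one {x y : V} (h : G.Adj x y) : ((G.dist x y : ℝ)) ≤ 1 := by
  have := SimpleGraph.dist_le (Walk.cons h (Walk.nil : G.Walk y y))
  simp only [Walk.length_cons, Walk.length_nil, zero_add] at this
  exact_mod_cast this

/-- Moving a pushed walk across one step of a discrete homotopy. -/
lemma dh_square (hG : G.Connected) {Q : ℝ} (hD2 : 2 * Q + 2 ≤ D) (g g' : V → V)
    (Hg : ∀ x y, G.Adj x y → ((G.dist (g x) (g y) : ℝ) ≤ Q))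
    (Hg' : ∀ x y, G.Adj x y → ((G.dist (g' x) (g' y) : ℝ) ≤ Q))
    {u v : V} (p : G.Walk u v)
    (Hstep : ∀ x ∈ p.support, ((G.dist (g x) (g' x) : ℝ) ≤ 1)) :
    DHomotopic G D ((pushWalk hG g p).append (geo hG (g v) (g' v)))
      ((geo hG (g u) (g' u)).append (pushWalk hG g' p)) := by
  induction p with
  | nil => exact dh_of_eq (by simp)
  | @cons u m w h p ih =>
    have ihh := ih (fun x hx => Hstep x (by rw [Walk.support_cons]; exact List.mem_cons_of_mem _ hx))
    have hsm : DHomotopic G D ((geo hG (g u) (g m)).append (geo hG (g m) (g' m)))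
        ((geo hG (g u) (g' u)).append (geo hG (g' u) (g' m))) := by
      refine DHomotopic.small _ _ ?_
      have hu : ((G.dist (g u) (g' u) : ℝ)) ≤ 1 :=
        Hstep u (Walk.start_mem_support _)
      have hm : ((G.dist (g m) (g' m) : ℝ)) ≤ 1 :=
        Hstep m (by rw [Walk.support_cons]; exact List.mem_cons_of_mem _ (Walk.start_mem_support _))
      have h1 := Hg _ _ h
      have h2 := Hg' _ _ h
      rw [Walk.length_append, Walk.length_reverse, Walk.length_append, Walk.length_append]
      push_cast
      rw [geo_length, geo_length, geo_length, geo_length]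
      linarith
    refine (dh_of_eq ?_).trans ((dh_appendRight (geo hG (g u) (g m)) ihh).trans
      ((dh_of_eq ?_).trans ((dh_appendLeft (pushWalk hG g' p) hsm).trans (dh_of_eq ?_))))
    · rw [pushWalk_cons]; exact (Walk.append_assoc _ _ _).symm
    · exact Walk.append_assoc _ _ _
    · rw [pushWalk_cons]; exact (Walk.append_assoc _ _ _).symm

/-- Moving a pushed walk (along a map that is pointwise the identity) back to the walk itself. -/
lemma dh_push_pointwise_id (hG : G.Connected) (hD2 : (2:ℝ) ≤ D) (g : V → V)
    (hg : ∀ x, g x = x) {u v : V} (p : G.Walk u v) :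
    DHomotopic G D ((pushWalk hG g p).append (geo hG (g v) v))
      ((geo hG (g u) u).append p) := by
  induction p with
  | nil => exact dh_of_eq (by simp)
  | @cons u m w h p ih =>
    have hsm : DHomotopic G D ((geo hG (g u) (g m)).append (geo hG (g m) m))
        ((geo hG (g u) u).append (Walk.cons h Walk.nil)) := by
      refine DHomotopic.small _ _ ?_
      rw [Walk.length_append, Walk.length_reverse, Walk.length_append, Walk.length_append]
      push_cast
      rw [geo_length, geo_length, geo_length]
      rw [hg u, hg m]
      have h1 : ((G.dist u m : ℝ)) ≤ 1 := adj_cast_dist_le_one h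
      have h2 : ((G.dist m m : ℝ)) = 0 := by rw [SimpleGraph.dist_self]; norm_num
      have h3 : ((G.dist u u : ℝ)) = 0 := by rw [SimpleGraph.dist_self]; norm_num
      simp only [Walk.length_cons, Walk.length_nil]
      push_cast
      linarith
    refine (dh_of_eq ?_).trans ((dh_appendRight (geo hG (g u) (g m)) ih).trans
      ((dh_of_eq ?_).trans ((dh_appendLeft p hsm).trans (dh_of_eq ?_))))
    · rw [pushWalk_cons]; exact (Walk.append_assoc _ _ _).symm
    · exact Walk.append_assoc _ _ _
    · rw [← Walk.append_assoc]
      simp [Walk.cons_append, Walk.nil_append]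

end DHAux

namespace DHAux

variable {Ξ : SimpleGraph V} {H : Ξ.Subgraph} {D Q : ℝ}

/-- Pushing along `f` into `Γ` sends `D`-homotopic walks of `Ξ` to `D`-homotopic walks of `Γ`. -/
lemma dh_compat (hΓ : H.coe.Connected) (f : V → V) (hfmem : ∀ b, f b ∈ H.verts)
    (hQ0 : 0 ≤ Q) (hD : 2 * Q + 2 ≤ D)
    (hfbQ : ∀ x y, Ξ.Adj x y →
      ((H.coe.dist ⟨f x, hfmem x⟩ ⟨f y, hfmem y⟩ : ℝ) ≤ Q))
    (hshort : ∀ (u : H.verts) (l : H.coe.Walk u u), (l.length : ℝ) ≤ Q * D →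
      DHomotopic H.coe D l Walk.nil)
    {u v : V} {p q : Ξ.Walk u v} (hpq : DHomotopic Ξ D p q) :
    DHomotopic H.coe D (pushWalk hΓ (fun v => ⟨f v, hfmem v⟩) p)
      (pushWalk hΓ (fun v => ⟨f v, hfmem v⟩) q) := by
  induction hpq with
  | refl p => exact DHomotopic.refl _
  | symm _ ih => exact ih.symm
  | trans _ _ ih1 ih2 => exact ih1.trans ih2
  | @backtrack x y h =>
    refine DHomotopic.small _ _ ?_
    rw [pushWalk_cons, pushWalk_cons, pushWalk_nil]
    simp only [Walk.nil_append, Walk.append_nil, Walk.length_reverse, Walk.length_append]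
    push_cast
    rw [geo_length, geo_length]
    have h1 := hfbQ _ _ h
    have h2 := hfbQ _ _ h.symm
    linarith
  | @small x y p q hlen =>
    apply dh_of_append_reverse
    apply hshort
    have l1 := pushWalk_length_le hΓ (fun v => (⟨f v, hfmem v⟩ : H.verts)) hQ0 hfbQ p
    have l2 := pushWalk_length_le hΓ (fun v => (⟨f v, hfmem v⟩ : H.verts)) hQ0 hfbQ q
    rw [Walk.length_append, Walk.length_reverse] at hlen ⊢
    push_cast at hlen ⊢
    nlinarith
  | congr r s _ ih =>
    have := DHomotopic.congr (pushWalk hΓ (fun v => (⟨f v, hfmem v⟩ : H.verts)) r)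
      (pushWalk hΓ (fun v => (⟨f v, hfmem v⟩ : H.verts)) s) ih
    rw [pushWalk_append, pushWalk_append, pushWalk_append, pushWalk_append]
    exact this

/-- Pushing the image in `Ξ` of a `Γ`-walk back into `Γ` recovers it up to `D`-homotopy
(and up to two trivial geodesics at the endpoints keeping track of the basepoints). -/
lemma dh_retr_map (hΓ : H.coe.Connected) (f : V → V) (hfmem : ∀ b, f b ∈ H.verts)
    (hQ0 : 0 ≤ Q) (hD : 2 * Q + 2 ≤ D)
    (hfbQ : ∀ x y, Ξ.Adj x y →
      ((H.coe.dist ⟨f x, hfmem x⟩ ⟨f y, hfmem y⟩ : ℝ) ≤ Q))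
    (hfixv : ∀ x : H.verts, (⟨f (x : V), hfmem _⟩ : H.verts) = x)
    {x y : H.verts} (l : H.coe.Walk x y) :
    DHomotopic H.coe D (pushWalk hΓ (fun v => ⟨f v, hfmem v⟩) (l.map H.hom))
      ((geo hΓ ⟨f (x : V), hfmem _⟩ x).append
        (l.append (geo hΓ ⟨f (y : V), hfmem _⟩ y).reverse)) := by
  induction l with
  | nil =>
    rename_i u
    refine DHomotopic.symm ?_
    have := dh_cancel_self (D := D) (geo hΓ (⟨f (u : V), hfmem _⟩ : H.verts) u)
    simpa [Walk.nil_append] using this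
  | @cons x m w h l ih =>
    have hsm : DHomotopic H.coe D
        ((geo hΓ ⟨f (x : V), hfmem _⟩ ⟨f (m : V), hfmem _⟩).append
          (geo hΓ ⟨f (m : V), hfmem _⟩ m))
        ((geo hΓ ⟨f (x : V), hfmem _⟩ x).append (Walk.cons h Walk.nil)) := by
      refine DHomotopic.small _ _ ?_
      rw [Walk.length_append, Walk.length_reverse, Walk.length_append, Walk.length_append]
      push_cast
      rw [geo_length, geo_length, geo_length]
      have h1 := hfbQ _ _ (H.coe_adj_sub x m h)
      rw [hfixv x, hfixv m] at h1
      rw [hfixv m, hfixv x]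
      have h2 : ((H.coe.dist m m : ℝ)) = 0 := by rw [SimpleGraph.dist_self]; norm_num
      have h3 : ((H.coe.dist x x : ℝ)) = 0 := by rw [SimpleGraph.dist_self]; norm_num
      simp only [Walk.length_cons, Walk.length_nil]
      push_cast
      linarith
    refine (dh_of_eq ?_).trans
      ((dh_appendRight (geo hΓ ⟨f (x : V), hfmem _⟩ ⟨f (m : V), hfmem _⟩) ih).trans
        ((dh_of_eq ?_).trans
          ((dh_appendLeft (l.append (geo hΓ ⟨f (w : V), hfmem _⟩ w).reverse) hsm).trans
            (dh_of_eq ?_))))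
    · rw [Walk.map_cons, pushWalk_cons]; rfl
    · exact Walk.append_assoc _ _ _
    · rw [← Walk.append_assoc]
      simp [Walk.cons_append, Walk.nil_append]

/-- The push into `Ξ` along `f` agrees, up to `D`-homotopy, with the image of the
push into `Γ`. -/
lemma dh_push_f_map (hΞ : Ξ.Connected) (hΓ : H.coe.Connected) (f : V → V)
    (hfmem : ∀ b, f b ∈ H.verts) (hQ0 : 0 ≤ Q) (hD : 2 * Q + 2 ≤ D)
    (hfbQ : ∀ x y, Ξ.Adj x y →
      ((H.coe.dist ⟨f x, hfmem x⟩ ⟨f y, hfmem y⟩ : ℝ) ≤ Q))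
    (hfXQ : ∀ x y, Ξ.Adj x y → ((Ξ.dist (f x) (f y) : ℝ) ≤ Q))
    {u v : V} (r : Ξ.Walk u v) :
    DHomotopic Ξ D (pushWalk hΞ f r)
      ((pushWalk hΓ (fun v => ⟨f v, hfmem v⟩) r).map H.hom) := by
  induction r with
  | nil => exact dh_of_eq rfl
  | @cons u m w h r ih =>
    have hsm : DHomotopic Ξ D (geo hΞ (f u) (f m))
        ((geo hΓ (⟨f u, hfmem u⟩ : H.verts) ⟨f m, hfmem m⟩).map H.hom) := by
      refine DHomotopic.small _ _ ?_
      simp only [Walk.length_append, Walk.length_reverse, Walk.length_map]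
      erw [Walk.length_reverse, Walk.length_map]
      push_cast
      rw [geo_length, geo_length]
      have h1 := hfXQ _ _ h
      have h2 := hfbQ _ _ h
      linarith
    rw [pushWalk_cons, pushWalk_cons, Walk.map_append]
    exact (dh_appendRight _ ih).trans
      (dh_appendLeft ((pushWalk hΓ (fun v => (⟨f v, hfmem v⟩ : H.verts)) r).map H.hom) hsm)

end DHAux

open DHAux

/-- **Proposition.** Let `Ξ` be a connected graph and `Γ ⊂ Ξ` a connected subgraph, `a ∈ Γ`,
`Q > 0`.  Suppose there is a `Q`-deformation retraction of `Ξ` onto `Γ` whose stable map `f`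
satisfies `d_Γ(f b₁, f b₂) ≤ Q` whenever `d_Ξ(b₁, b₂) ≤ 1`, and suppose `D > 2Q + 2` is such
that every loop in `Γ` of length at most `Q·D` is trivial (up to conjugacy) in `π₁^D(Γ, a)`.
Then the inclusion `Γ ↪ Ξ` induces an isomorphism `π₁^D(Γ, a) → π₁^D(Ξ, a)`. -/
theorem deformation_retraction_pi1_iso
    (Ξ : SimpleGraph V) (hΞ : Ξ.Connected)
    (H : Ξ.Subgraph) (hΓconn : H.coe.Connected)
    (a : H.verts) (Q D : ℝ) (hQ : 0 < Q) (hD : 2 * Q + 2 < D)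
    -- the `Q`-deformation retraction of `Ξ` onto `Γ` and its stable map `f`
    (fseq : ℕ → V → V) (f : V → V) (hfmem : ∀ b, f b ∈ H.verts)
    (h0 : fseq 0 = id)
    (hid : ∀ i, ∀ v ∈ H.verts, fseq i v = v)
    (hQlip : ∀ i v w, Ξ.dist v w ≤ 1 → (Ξ.dist (fseq i v) (fseq i w) : ℝ) ≤ Q)
    (hstep : ∀ i v, Ξ.dist (fseq i v) (fseq (i + 1) v) ≤ 1)
    (hstable : ∀ b, ∃ n, ∀ i, n ≤ i → fseq i b = f b)
    -- condition (1): the stable map is `Q`-Lipschitz into `Γ` at scale 1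
    (hfQ : ∀ b₁ b₂, Ξ.dist b₁ b₂ ≤ 1 →
      (H.coe.dist ⟨f b₁, hfmem b₁⟩ ⟨f b₂, hfmem b₂⟩ : ℝ) ≤ Q)
    -- condition (2): all `Γ`-loops of length at most `Q·D` are trivial in `π₁^D(Γ, ·)`
    (hshort : ∀ (u : H.verts) (l : H.coe.Walk u u), (l.length : ℝ) ≤ Q * D →
      DHomotopic H.coe D l Walk.nil) :
    ∃ F : CoarsePi1 H.coe D a → CoarsePi1 Ξ D (a : V),
      (∀ p : H.coe.Walk a a,
        F (Quotient.mk (dHomSetoid H.coe D a) p) =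
          Quotient.mk (dHomSetoid Ξ D (a : V)) (p.map H.hom)) ∧
      Function.Bijective F := by
  classical
  have hQ0 : (0 : ℝ) ≤ Q := le_of_lt hQ
  have hD' : 2 * Q + 2 ≤ D := le_of_lt hD
  have hD2 : (2 : ℝ) ≤ D := by linarith
  -- basic facts about `f`
  have ffix : ∀ v, v ∈ H.verts → f v = v := by
    intro v hv
    obtain ⟨n, hn⟩ := hstable v
    rw [← hn n le_rfl]
    exact hid n v hv
  have efa : f (a : V) = (a : V) := ffix _ a.2
  have hfixv : ∀ x : H.verts, (⟨f (x : V), hfmem _⟩ : H.verts) = x :=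
    fun x => Subtype.ext (ffix _ x.2)
  have ea : ∀ i, fseq i (a : V) = (a : V) := fun i => hid i _ a.2
  -- adjacency and distance facts
  have adjd : ∀ {x y : V}, Ξ.Adj x y → Ξ.dist x y ≤ 1 := by
    intro x y h
    simpa using SimpleGraph.dist_le (Walk.cons h (Walk.nil : Ξ.Walk y y))
  have hfbQ : ∀ x y, Ξ.Adj x y →
      ((H.coe.dist ⟨f x, hfmem x⟩ ⟨f y, hfmem y⟩ : ℝ) ≤ Q) :=
    fun x y h => hfQ x y (adjd h)
  have distLe : ∀ x y : H.verts, ((Ξ.dist (x : V) (y : V) : ℝ)) ≤ ((H.coe.dist x y : ℝ)) := by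
    intro x y
    have := SimpleGraph.dist_le ((geo hΓconn x y).map H.hom)
    rw [Walk.length_map, geo_length] at this
    exact_mod_cast this
  have hfXQ : ∀ x y, Ξ.Adj x y → ((Ξ.dist (f x) (f y) : ℝ) ≤ Q) :=
    fun x y h => le_trans (distLe ⟨f x, hfmem x⟩ ⟨f y, hfmem y⟩) (hfbQ x y h)
  have hQlip' : ∀ i x y, Ξ.Adj x y → ((Ξ.dist (fseq i x) (fseq i y) : ℝ) ≤ Q) :=
    fun i x y h => hQlip i x y (adjd h)
  -- the key copy-square manoeuvre at the basepoint
  have key : ∀ (g g' : V → V) (eg : g (a : V) = (a : V)) (eg' : g' (a : V) = (a : V))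
      (_ : ∀ x y, Ξ.Adj x y → ((Ξ.dist (g x) (g y) : ℝ) ≤ Q))
      (_ : ∀ x y, Ξ.Adj x y → ((Ξ.dist (g' x) (g' y) : ℝ) ≤ Q))
      (r : Ξ.Walk (a : V) (a : V))
      (_ : ∀ x ∈ r.support, ((Ξ.dist (g x) (g' x) : ℝ) ≤ 1)),
      DHomotopic Ξ D ((pushWalk hΞ g r).copy eg eg) ((pushWalk hΞ g' r).copy eg' eg') := by
    intro g g' eg eg' Hg Hg' r Hstep
    refine dh_copy_square eg eg' _ _ (geo hΞ (g (a : V)) (g' (a : V))) ?_ ?_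
    · rw [geo_length, eg, eg', SimpleGraph.dist_self]
    · exact dh_square hΞ hD' g g' Hg Hg' r Hstep
  -- the chain of stages
  have chain : ∀ n (r : Ξ.Walk (a : V) (a : V)),
      DHomotopic Ξ D ((pushWalk hΞ (fseq n) r).copy (ea n) (ea n)) r := by
    intro n
    induction n with
    | zero =>
      intro r
      have h00 : ∀ x, fseq 0 x = x := fun x => by rw [h0]; rfl
      have hsq := dh_push_pointwise_id hΞ hD2 (fseq 0) h00 r
      have := dh_copy_square (ea 0) (rfl : (a : V) = (a : V)) _ r
        (geo hΞ (fseq 0 (a : V)) (a : V)) ?_ hsq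
      · simpa using this
      · rw [geo_length, ea 0, SimpleGraph.dist_self]
    | succ n ih =>
      intro r
      refine DHomotopic.trans ?_ (ih r)
      refine key (fseq (n + 1)) (fseq n) (ea (n + 1)) (ea n) (hQlip' (n + 1)) (hQlip' n) r ?_
      intro x _
      rw [SimpleGraph.dist_comm]
      exact_mod_cast Nat.cast_le.mpr (hstep n x)
  -- the full retraction statement
  have retract : ∀ r : Ξ.Walk (a : V) (a : V),
      DHomotopic Ξ D r
        (((pushWalk hΓconn (fun v => ⟨f v, hfmem v⟩) r).map H.hom).copy efa efa) := by
    intro r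
    set N : V → ℕ := fun v => (hstable v).choose with hN
    set n : ℕ := r.support.toFinset.sup N with hn
    have hstab : ∀ x ∈ r.support, fseq n x = f x := by
      intro x hx
      exact (hstable x).choose_spec n (Finset.le_sup (f := N) (List.mem_toFinset.mpr hx))
    have last : DHomotopic Ξ D ((pushWalk hΞ (fseq n) r).copy (ea n) (ea n))
        ((pushWalk hΞ f r).copy efa efa) := by
      refine key (fseq n) f (ea n) efa (hQlip' n) hfXQ r ?_
      intro x hx
      rw [hstab x hx, SimpleGraph.dist_self]
      norm_num
    have final4 : DHomotopic Ξ D (pushWalk hΞ f r)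
        ((pushWalk hΓconn (fun v => ⟨f v, hfmem v⟩) r).map H.hom) :=
      dh_push_f_map hΞ hΓconn f hfmem hQ0 hD' hfbQ hfXQ r
    exact ((chain n r).symm.trans last).trans (dh_copy efa efa final4)
  -- definition of `F`
  refine ⟨Quotient.lift
      (fun p : H.coe.Walk a a => Quotient.mk (dHomSetoid Ξ D (a : V)) (p.map H.hom))
      (fun p q h => Quotient.sound (dh_map H.hom h)), fun p => rfl, ?_, ?_⟩
  · -- injectivity
    intro x y
    refine Quotient.inductionOn₂ x y ?_
    intro p q hpq
    have hmap : DHomotopic Ξ D (p.map H.hom) (q.map H.hom) := Quotient.exact hpq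
    have hc := dh_compat hΓconn f hfmem hQ0 hD' hfbQ hshort hmap
    have r1 := dh_retr_map hΓconn f hfmem hQ0 hD' hfbQ hfixv p
    have r2 := dh_retr_map hΓconn f hfmem hQ0 hD' hfbQ hfixv q
    have hcomb := (r1.symm.trans hc).trans r2
    have h1 := dh_cancel_left _ hcomb
    have h2 := dh_cancel_right _ h1
    exact Quotient.sound h2
  · -- surjectivity
    intro y
    refine Quotient.inductionOn y ?_
    intro r
    have eA : (⟨f (a : V), hfmem _⟩ : H.verts) = a := Subtype.ext efa
    refine ⟨Quotient.mk (dHomSetoid H.coe D a)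
      ((pushWalk hΓconn (fun v => ⟨f v, hfmem v⟩) r).copy eA eA), ?_⟩
    refine Quotient.sound ?_
    rw [Walk.map_copy]
    exact (retract r).symm
end

section
/- For every δ, L there exists Δ = Δ(δ, L) such that the following holds. Let Υ be a δ-hyperbolic, δ-visible geodesic space and y ∈ Υ a point such that some δ-adapted visual metric on ∂Υ with basepoint y is L-linearly connected. Then for every R > 0, Υ is (Δ, R)-spherically connected at y: for any points p, q at distance R from y, there is a sequence p = p₀, …, pₙ = q with d(y, pᵢ) = R, Gromov products (pᵢ | pᵢ₊₁)_y ≥ R − 5δ, and (p | pᵢ)_y ≥ (p | q)_y − Δ. -/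
open Metric Set

section Prelim

variable {X : Type*} [MetricSpace X]

/-- `r` is a unit-speed geodesic ray (parametrized on `[0, ∞)`). -/
def IsGeodesicRay (r : ℝ → X) : Prop :=
  ∀ ⦃s t : ℝ⦄, 0 ≤ s → 0 ≤ t → dist (r s) (r t) = |s - t|

/-- A geodesic ray in `X`. -/
structure GRay (X : Type*) [MetricSpace X] where
  toFun : ℝ → X
  isRay : IsGeodesicRay toFun

/-- Two rays are asymptotic if they stay at bounded distance from one another. -/
def GRay.asymp (r r' : GRay X) : Prop :=
  ∃ C : ℝ, ∀ t : ℝ, 0 ≤ t → dist (r.toFun t) (r'.toFun t) ≤ C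

instance raySetoid (X : Type*) [MetricSpace X] : Setoid (GRay X) where
  r := GRay.asymp
  iseqv := by
    refine ⟨fun r => ⟨0, fun t ht => by simp⟩, ?_, ?_⟩
    · rintro r r' ⟨C, hC⟩
      exact ⟨C, fun t ht => by rw [dist_comm]; exact hC t ht⟩
    · rintro r r' r'' ⟨C, hC⟩ ⟨C', hC'⟩
      exact ⟨C + C', fun t ht =>
        (dist_triangle _ (r'.toFun t) _).trans (add_le_add (hC t ht) (hC' t ht))⟩

/-- The Gromov boundary of `X`: asymptoty classes of geodesic rays. -/
abbrev GromovBdry (X : Type*) [MetricSpace X] := Quotient (raySetoid X)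

/-- The Gromov product of `x` and `y` with respect to `w`. -/
noncomputable def gromovProd (w x y : X) : ℝ :=
  (dist x w + dist y w - dist x y) / 2

/-- `X` is `δ`-hyperbolic (four-point Gromov product condition). -/
def GromovHyperbolic (X : Type*) [MetricSpace X] (δ : ℝ) : Prop :=
  ∀ x y z w : X, min (gromovProd w x y) (gromovProd w y z) - δ ≤ gromovProd w x z

/-- `X` is `μ`-visible: from every `a` there is a geodesic ray passing within `μ` of `b`. -/
def Visible (X : Type*) [MetricSpace X] (μ : ℝ) : Prop :=
  ∀ a b : X, ∃ r : GRay X, r.toFun 0 = a ∧ ∃ t : ℝ, 0 ≤ t ∧ dist b (r.toFun t) ≤ μ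

/-- The Gromov product of two boundary points with respect to `w` (infimum over representing
rays of the liminf of Gromov products along the rays). -/
noncomputable def bProd (w : X) (ξ η : GromovBdry X) : ℝ :=
  sInf {a | ∃ r r' : GRay X, Quotient.mk (raySetoid X) r = ξ ∧
    Quotient.mk (raySetoid X) r' = η ∧
    a = Filter.liminf (fun t => gromovProd w (r.toFun t) (r'.toFun t)) Filter.atTop}

/-- The multiplicative constant `κ = (3 − 2e^{1/3})⁻¹` of a `δ`-adapted visual metric. -/
noncomputable def adaptedKappa : ℝ := (3 - 2 * Real.exp (1 / 3))⁻¹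

/-- A metric `m` on the Gromov boundary is a `δ`-adapted visual metric at `w` if it is
`κ`-bi-Lipschitz to `e^{−ε(·|·)_w}` with `ε = 1/(6δ)` and `κ = (3 − 2e^{1/3})⁻¹`. -/
def IsAdaptedVisualMetric (δ : ℝ) (w : X) (m : MetricSpace (GromovBdry X)) : Prop :=
  ∀ ξ η : GromovBdry X, ξ ≠ η →
    adaptedKappa⁻¹ * Real.exp (-(1 / (6 * δ)) * bProd w ξ η) ≤ @dist _ m.toDist ξ η ∧
    @dist _ m.toDist ξ η ≤ adaptedKappa * Real.exp (-(1 / (6 * δ)) * bProd w ξ η)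

/-- The metric space `(B, m)` is `L`-linearly connected. -/
def LinConnWith {B : Type*} (m : MetricSpace B) (L : ℝ) : Prop :=
  letI := m
  ∀ x y : B, ∃ J : Set B, x ∈ J ∧ y ∈ J ∧ IsConnected J ∧
    EMetric.diam J ≤ ENNReal.ofReal (L * dist x y)

/-- `X` is `(Δ, R)`-spherically connected at `y`. -/
def SphericallyConnected (X : Type*) [MetricSpace X] (δ Δ R : ℝ) (y : X) : Prop :=
  ∀ p q : X, dist p y = R → dist q y = R →
    ∃ (n : ℕ) (c : ℕ → X), c 0 = p ∧ c n = q ∧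
      (∀ i ≤ n, dist y (c i) = R) ∧
      (∀ i < n, R - 5 * δ ≤ gromovProd y (c i) (c (i + 1))) ∧
      (∀ i ≤ n, gromovProd y p q - Δ ≤ gromovProd y p (c i))

end Prelim

section AuxLemmas

open Filter

variable {X : Type*} [MetricSpace X]

lemma gp_nonneg (w x z : X) : 0 ≤ gromovProd w x z := by
  have h := dist_triangle x w z
  rw [dist_comm w z] at h
  unfold gromovProd
  linarith

lemma gp_comm (w x z : X) : gromovProd w x z = gromovProd w z x := by
  unfold gromovProd
  rw [dist_comm x z]
  ring

lemma gp_le_left (w x z : X) : gromovProd w x z ≤ dist x w := by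
  have h := dist_triangle z x w
  rw [dist_comm z x] at h
  unfold gromovProd
  linarith

lemma gp_self (w x : X) : gromovProd w x x = dist x w := by
  unfold gromovProd
  simp

lemma ray_dist_base {y : X} {σ : GRay X} (h0 : σ.toFun 0 = y) {t : ℝ} (ht : 0 ≤ t) :
    dist (σ.toFun t) y = t := by
  rw [← h0, σ.isRay ht le_rfl]
  simp [abs_of_nonneg ht]

lemma ray_dist_lb {y : X} (σ : GRay X) {t : ℝ} (ht : 0 ≤ t) :
    t - dist (σ.toFun 0) y ≤ dist (σ.toFun t) y := by
  have h := dist_triangle (σ.toFun t) y (σ.toFun 0)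
  rw [dist_comm y (σ.toFun 0)] at h
  have h2 : dist (σ.toFun t) (σ.toFun 0) = t := by
    rw [σ.isRay ht le_rfl]; simp [abs_of_nonneg ht]
  linarith

lemma ray_dist_ub {y : X} (σ : GRay X) {t : ℝ} (ht : 0 ≤ t) :
    dist (σ.toFun t) y ≤ t + dist (σ.toFun 0) y := by
  have h := dist_triangle (σ.toFun t) (σ.toFun 0) y
  have h2 : dist (σ.toFun t) (σ.toFun 0) = t := by
    rw [σ.isRay ht le_rfl]; simp [abs_of_nonneg ht]
  linarith

lemma near_ray_gp {y b : X} {σ : GRay X} (h0 : σ.toFun 0 = y) {t₀ δ' : ℝ} (ht₀ : 0 ≤ t₀)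
    (hd : dist b (σ.toFun t₀) ≤ δ') {s : ℝ} (hs : 0 ≤ s) :
    min (dist b y) s - δ' ≤ gromovProd y b (σ.toFun s) := by
  have hδ' : 0 ≤ δ' := le_trans dist_nonneg hd
  have h1 : dist (σ.toFun t₀) y = t₀ := ray_dist_base h0 ht₀
  have h2 : dist (σ.toFun s) y = s := ray_dist_base h0 hs
  have h3 : |t₀ - dist b y| ≤ δ' := by
    have h := abs_dist_sub_le (σ.toFun t₀) b y
    rw [h1, dist_comm (σ.toFun t₀) b] at h
    exact le_trans h hd
  have h4 : dist b (σ.toFun s) ≤ δ' + |t₀ - s| := by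
    have h := dist_triangle b (σ.toFun t₀) (σ.toFun s)
    rw [σ.isRay ht₀ hs] at h
    linarith
  have h5 : |t₀ - s| ≤ |t₀ - dist b y| + |dist b y - s| := abs_sub_le t₀ (dist b y) s
  unfold gromovProd
  rw [h2]
  rcases le_total (dist b y) s with h | h
  · rw [min_eq_left h]
    have h6 : |dist b y - s| = -(dist b y - s) := abs_of_nonpos (by linarith)
    linarith
  · rw [min_eq_right h]
    have h6 : |dist b y - s| = dist b y - s := abs_of_nonneg (by linarith)
    linarith

lemma hyp_trans {δ : ℝ} (hδ : 0 ≤ δ) (hyp : GromovHyperbolic X δ) (y a b c d : X) :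
    min (min (gromovProd y a b) (gromovProd y b c)) (gromovProd y c d) - 2 * δ ≤
      gromovProd y a d := by
  have h1 := hyp a b c y
  have h2 := hyp a c d y
  have k1 : min (min (gromovProd y a b) (gromovProd y b c)) (gromovProd y c d) - δ ≤
      min (gromovProd y a c) (gromovProd y c d) := by
    refine le_min ?_ ?_
    · have h := min_le_left (min (gromovProd y a b) (gromovProd y b c)) (gromovProd y c d)
      linarith
    · have h := min_le_right (min (gromovProd y a b) (gromovProd y b c)) (gromovProd y c d)
      linarith
  linarith

lemma asymp_ray_gp {y : X} {r σ : GRay X} (h0 : σ.toFun 0 = y) {C : ℝ}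
    (hC : ∀ t, 0 ≤ t → dist (r.toFun t) (σ.toFun t) ≤ C) {t : ℝ} (ht : 0 ≤ t) :
    t - C ≤ gromovProd y (r.toFun t) (σ.toFun t) := by
  have h1 : dist (σ.toFun t) y = t := ray_dist_base h0 ht
  have h4 := hC t ht
  have h2 : t - C ≤ dist (r.toFun t) y := by
    have h3 := dist_triangle (σ.toFun t) (r.toFun t) y
    rw [dist_comm (σ.toFun t) (r.toFun t)] at h3
    linarith
  unfold gromovProd
  rw [h1]
  linarith

lemma ray_self_gp {y : X} (r : GRay X) {s t : ℝ} (hs : 0 ≤ s) (ht : 0 ≤ t) :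
    min s t - dist (r.toFun 0) y ≤ gromovProd y (r.toFun s) (r.toFun t) := by
  have h1 := ray_dist_lb (y := y) r hs
  have h2 := ray_dist_lb (y := y) r ht
  have h3 : dist (r.toFun s) (r.toFun t) = |s - t| := r.isRay hs ht
  unfold gromovProd
  rw [h3]
  rcases le_total s t with h | h
  · rw [min_eq_left h, abs_of_nonpos (by linarith)]; linarith
  · rw [min_eq_right h, abs_of_nonneg (by linarith)]; linarith

lemma liminf_gp_nonneg {f : ℝ → ℝ} (h : ∀ t, 0 ≤ f t) : 0 ≤ liminf f atTop := by
  rw [liminf_eq]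
  by_cases hb : BddAbove {a | ∀ᶠ t in atTop, a ≤ f t}
  · exact le_csSup hb (Eventually.of_forall h)
  · rw [Real.sSup_of_not_bddAbove hb]

lemma eventually_of_le_liminf {f : ℝ → ℝ} (h0 : ∀ t, 0 ≤ f t) {B : ℝ}
    (hB : B ≤ liminf f atTop) (hBpos : 1 < B) : ∀ᶠ t in atTop, B - 1 ≤ f t := by
  rw [liminf_eq] at hB
  have h0m : (0 : ℝ) ∈ {a | ∀ᶠ t in atTop, a ≤ f t} := Eventually.of_forall h0
  by_cases hb : BddAbove {a | ∀ᶠ t in atTop, a ≤ f t}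
  · obtain ⟨a, ha, hlt⟩ := exists_lt_of_lt_csSup ⟨0, h0m⟩ (lt_of_lt_of_le (show B - 1 < B by linarith) hB)
    filter_upwards [ha] with t ht
    linarith
  · rw [Real.sSup_of_not_bddAbove hb] at hB
    linarith

lemma le_liminf_of_bdd {f : ℝ → ℝ} {K c : ℝ} (hK : ∀ t, 0 ≤ t → f t ≤ K)
    (hc : ∀ᶠ t in atTop, c ≤ f t) : c ≤ liminf f atTop := by
  rw [liminf_eq]
  refine le_csSup ⟨K, ?_⟩ hc
  rintro a ha
  obtain ⟨t, hat, ht0⟩ := (ha.and (eventually_ge_atTop (0 : ℝ))).exists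
  exact hat.trans (hK t ht0)

lemma bProd_le_liminf (y : X) (r r' : GRay X) :
    bProd y (Quotient.mk (raySetoid X) r) (Quotient.mk (raySetoid X) r') ≤
      liminf (fun t => gromovProd y (r.toFun t) (r'.toFun t)) atTop := by
  apply csInf_le
  · refine ⟨0, ?_⟩
    rintro a ⟨s, s', -, -, rfl⟩
    exact liminf_gp_nonneg (fun t => gp_nonneg _ _ _)
  · exact ⟨r, r', rfl, rfl, rfl⟩

lemma le_bProd {y : X} {ξ η : GromovBdry X} {c : ℝ}
    (h : ∀ r r' : GRay X, Quotient.mk (raySetoid X) r = ξ →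
      Quotient.mk (raySetoid X) r' = η →
      c ≤ liminf (fun t => gromovProd y (r.toFun t) (r'.toFun t)) atTop) :
    c ≤ bProd y ξ η := by
  apply le_csInf
  · exact ⟨_, Quotient.out ξ, Quotient.out η, Quotient.out_eq ξ, Quotient.out_eq η, rfl⟩
  · rintro a ⟨r, r', h1, h2, rfl⟩
    exact h r r' h1 h2

end AuxLemmas

section AuxLemmas2

open Filter Metric Set

variable {X : Type*} [MetricSpace X]

lemma asymp_of_unbdd {δ : ℝ} (hδ : 0 ≤ δ) (hyp : GromovHyperbolic X δ) {y : X}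
    {r r' : GRay X}
    (h : ∀ K, ∃ t, 0 ≤ t ∧ K ≤ gromovProd y (r.toFun t) (r'.toFun t)) :
    r.asymp r' := by
  have ha0 : 0 ≤ dist (r.toFun 0) y := dist_nonneg
  have ha0' : 0 ≤ dist (r'.toFun 0) y := dist_nonneg
  refine ⟨3 * dist (r.toFun 0) y + 3 * dist (r'.toFun 0) y + 4 * δ, fun s hs => ?_⟩
  obtain ⟨t, ht0, hft⟩ := h (s + dist (r.toFun 0) y + 1)
  have hub : dist (r.toFun t) y ≤ t + dist (r.toFun 0) y := ray_dist_ub r ht0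
  have hle : gromovProd y (r.toFun t) (r'.toFun t) ≤ dist (r.toFun t) y := gp_le_left _ _ _
  have hts : s ≤ t := by linarith
  have k1 := hyp_trans hδ hyp y (r.toFun s) (r.toFun t) (r'.toFun t) (r'.toFun s)
  have k2 : min s t - dist (r.toFun 0) y ≤ gromovProd y (r.toFun s) (r.toFun t) :=
    ray_self_gp r hs ht0
  have k3 : min t s - dist (r'.toFun 0) y ≤ gromovProd y (r'.toFun t) (r'.toFun s) :=
    ray_self_gp r' ht0 hs
  rw [min_eq_left hts] at k2
  rw [min_eq_right hts] at k3
  have k4 : s - dist (r.toFun 0) y - dist (r'.toFun 0) y - 2 * δ ≤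
      gromovProd y (r.toFun s) (r'.toFun s) := by
    have m1 : s - dist (r.toFun 0) y - dist (r'.toFun 0) y ≤
        min (min (gromovProd y (r.toFun s) (r.toFun t))
          (gromovProd y (r.toFun t) (r'.toFun t)))
          (gromovProd y (r'.toFun t) (r'.toFun s)) := by
      refine le_min (le_min ?_ ?_) ?_ <;> linarith
    linarith
  have d1 : dist (r.toFun s) y ≤ s + dist (r.toFun 0) y := ray_dist_ub r hs
  have d2 : dist (r'.toFun s) y ≤ s + dist (r'.toFun 0) y := ray_dist_ub r' hs
  unfold gromovProd at k4
  linarith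

lemma pair_eventually {δ : ℝ} (hδ : 0 ≤ δ) (hyp : GromovHyperbolic X δ) (y : X)
    {r r' : GRay X} {B : ℝ}
    (h : Quotient.mk (raySetoid X) r = Quotient.mk (raySetoid X) r' ∨
      B ≤ bProd y (Quotient.mk (raySetoid X) r) (Quotient.mk (raySetoid X) r')) :
    ∀ᶠ t in atTop, B - 1 ≤ gromovProd y (r.toFun t) (r'.toFun t) := by
  rcases h with h | h
  · obtain ⟨C, hC⟩ := Quotient.exact h
    rw [eventually_atTop]
    refine ⟨max (B + (dist (r.toFun 0) y + dist (r'.toFun 0) y + C) / 2) 0, fun t ht => ?_⟩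
    have ht0 : 0 ≤ t := le_trans (le_max_right _ _) ht
    have htB : B + (dist (r.toFun 0) y + dist (r'.toFun 0) y + C) / 2 ≤ t :=
      le_trans (le_max_left _ _) ht
    have h1 := ray_dist_lb (y := y) r ht0
    have h2 := ray_dist_lb (y := y) r' ht0
    have h3 := hC t ht0
    unfold gromovProd
    linarith
  · by_cases hB : 1 < B
    · exact eventually_of_le_liminf (fun t => gp_nonneg _ _ _)
        (le_trans h (bProd_le_liminf y r r')) hB
    · exact Eventually.of_forall fun t =>
        le_trans (by linarith : B - 1 ≤ 0) (gp_nonneg y _ _)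

lemma gp_le_bProd {δ : ℝ} (hδ : 0 ≤ δ) (hyp : GromovHyperbolic X δ) {y p q : X}
    {σp σq : GRay X} (hp0 : σp.toFun 0 = y) (hq0 : σq.toFun 0 = y)
    {tp tq : ℝ} (htp : 0 ≤ tp) (htq : 0 ≤ tq)
    (hdp : dist p (σp.toFun tp) ≤ δ) (hdq : dist q (σq.toFun tq) ≤ δ)
    (hne : Quotient.mk (raySetoid X) σp ≠ Quotient.mk (raySetoid X) σq) :
    gromovProd y p q - 5 * δ ≤
      bProd y (Quotient.mk (raySetoid X) σp) (Quotient.mk (raySetoid X) σq) := by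
  apply le_bProd
  intro r r' hr hr'
  obtain ⟨C, hC⟩ := Quotient.exact hr
  obtain ⟨C', hC'⟩ := Quotient.exact hr'
  by_cases hbdd : ∀ K, ∃ t, 0 ≤ t ∧ K ≤ gromovProd y (r.toFun t) (r'.toFun t)
  · exfalso
    have hs := Quotient.sound (s := raySetoid X) (a := r) (b := r') (asymp_of_unbdd hδ hyp hbdd)
    rw [hr, hr'] at hs
    exact hne hs
  · push_neg at hbdd
    obtain ⟨K, hK⟩ := hbdd
    apply le_liminf_of_bdd (K := K) (fun t ht => (hK t ht).le)
    rw [eventually_atTop]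
    refine ⟨max (max (dist p y) (dist q y))
      (max (gromovProd y p q + C) (gromovProd y p q + C')), fun t ht => ?_⟩
    have ht0 : 0 ≤ t :=
      le_trans (le_trans dist_nonneg (le_trans (le_max_left _ _) (le_max_left _ _))) ht
    have htp' : dist p y ≤ t := le_trans (le_trans (le_max_left _ _) (le_max_left _ _)) ht
    have htq' : dist q y ≤ t := le_trans (le_trans (le_max_right _ _) (le_max_left _ _)) ht
    have htC : gromovProd y p q + C ≤ t :=
      le_trans (le_trans (le_max_left _ _) (le_max_right _ _)) ht
    have htC' : gromovProd y p q + C' ≤ t :=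
      le_trans (le_trans (le_max_right _ _) (le_max_right _ _)) ht
    -- products with the visibility rays
    have e1 : t - C ≤ gromovProd y (r.toFun t) (σp.toFun t) := asymp_ray_gp hp0 hC ht0
    have e2' : t - C' ≤ gromovProd y (r'.toFun t) (σq.toFun t) := asymp_ray_gp hq0 hC' ht0
    have e2 : t - C' ≤ gromovProd y (σq.toFun t) (r'.toFun t) := by
      rw [gp_comm]; exact e2'
    -- (σp t | σq t) is large
    have c1 : dist p y - δ ≤ gromovProd y (σp.toFun t) p := by
      have h := near_ray_gp hp0 htp hdp ht0
      rw [min_eq_left htp'] at h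
      rw [gp_comm]; exact h
    have c2 : dist q y - δ ≤ gromovProd y q (σq.toFun t) := by
      have h := near_ray_gp hq0 htq hdq ht0
      rw [min_eq_left htq'] at h
      exact h
    have hpq1 : gromovProd y p q ≤ dist p y := gp_le_left _ _ _
    have hpq2 : gromovProd y p q ≤ dist q y := by rw [gp_comm]; exact gp_le_left _ _ _
    have e3 : gromovProd y p q - 3 * δ ≤ gromovProd y (σp.toFun t) (σq.toFun t) := by
      have k := hyp_trans hδ hyp y (σp.toFun t) p q (σq.toFun t)
      have hm : gromovProd y p q - δ ≤
          min (min (gromovProd y (σp.toFun t) p) (gromovProd y p q))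
            (gromovProd y q (σq.toFun t)) :=
        le_min (le_min (by linarith) (by linarith)) (by linarith)
      linarith
    have k := hyp_trans hδ hyp y (r.toFun t) (σp.toFun t) (σq.toFun t) (r'.toFun t)
    have hm : gromovProd y p q - 3 * δ ≤
        min (min (gromovProd y (r.toFun t) (σp.toFun t))
          (gromovProd y (σp.toFun t) (σq.toFun t)))
          (gromovProd y (σq.toFun t) (r'.toFun t)) :=
      le_min (le_min (by linarith) (by linarith)) (by linarith)
    linarith

lemma exp_third_lt : Real.exp (1/3 : ℝ) < 3/2 := by
  by_contra hcon
  push_neg at hcon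
  have h1 : ((3:ℝ)/2) ^ (3:ℕ) ≤ Real.exp (1/3 : ℝ) ^ (3:ℕ) :=
    pow_le_pow_left₀ (by norm_num) hcon 3
  have h3 : Real.exp (1/3 : ℝ) ^ (3:ℕ) = Real.exp 1 := by
    rw [← Real.exp_nat_mul]; norm_num
  rw [h3] at h1
  have h2 := Real.exp_one_lt_d9
  norm_num at h1
  linarith

lemma kappa_inv_pos : 0 < 3 - 2 * Real.exp (1/3 : ℝ) := by
  have h := exp_third_lt; linarith

lemma kappa_pos : 0 < adaptedKappa :=
  inv_pos.mpr kappa_inv_pos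

lemma one_le_kappa : 1 ≤ adaptedKappa := by
  rw [adaptedKappa, one_le_inv_iff₀]
  have h := Real.one_le_exp (by norm_num : (0:ℝ) ≤ 1/3)
  exact ⟨kappa_inv_pos, by linarith⟩

lemma helper_cancel {δ b c K : ℝ} (hδ : 0 < δ)
    (h : -(1/(6*δ)) * b ≤ K + -(1/(6*δ)) * c) : c - 6*δ*K ≤ b := by
  have hδ' : δ ≠ 0 := hδ.ne'
  have h6 : (0:ℝ) < 6*δ := by linarith
  have h2 := mul_le_mul_of_nonneg_left h h6.le
  have e1 : (6*δ) * (-(1/(6*δ)) * b) = -b := by field_simp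
  have e2 : (6*δ) * (K + -(1/(6*δ)) * c) = 6*δ*K - c := by field_simp; ring
  rw [e1, e2] at h2
  linarith

lemma exists_eps_chain {B : Type*} [MetricSpace B] {J : Set B} (hJ : IsConnected J)
    {x y : B} (hx : x ∈ J) (hy : y ∈ J) {e : ℝ} (he : 0 < e) :
    ∃ (n : ℕ) (c : ℕ → B), c 0 = x ∧ c n = y ∧ (∀ i ≤ n, c i ∈ J) ∧
      ∀ i < n, dist (c i) (c (i + 1)) ≤ e := by
  set P : B → Prop := fun z => ∃ (n : ℕ) (c : ℕ → B), c 0 = x ∧ c n = z ∧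
      (∀ i ≤ n, c i ∈ J) ∧ ∀ i < n, dist (c i) (c (i + 1)) ≤ e with hP
  by_contra hy'
  have hPx : P x :=
    ⟨0, fun _ => x, rfl, rfl, fun i _ => hx, fun i hi => absurd hi (Nat.not_lt_zero i)⟩
  set U : Set B := ⋃ z ∈ {z | z ∈ J ∧ P z}, ball z (e/2) with hU
  set V : Set B := ⋃ z ∈ {z | z ∈ J ∧ ¬ P z}, ball z (e/2) with hV
  have hUopen : IsOpen U := isOpen_biUnion fun _ _ => isOpen_ball
  have hVopen : IsOpen V := isOpen_biUnion fun _ _ => isOpen_ball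
  have hsub : J ⊆ U ∪ V := by
    intro z hz
    by_cases hPz : P z
    · exact Or.inl (mem_biUnion ⟨hz, hPz⟩ (mem_ball_self (by linarith)))
    · exact Or.inr (mem_biUnion ⟨hz, hPz⟩ (mem_ball_self (by linarith)))
  have hUne : (J ∩ U).Nonempty :=
    ⟨x, hx, mem_biUnion ⟨hx, hPx⟩ (mem_ball_self (by linarith))⟩
  have hVne : (J ∩ V).Nonempty :=
    ⟨y, hy, mem_biUnion ⟨hy, hy'⟩ (mem_ball_self (by linarith))⟩
  obtain ⟨w, hw⟩ := hJ.isPreconnected U V hUopen hVopen hsub hUne hVne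
  obtain ⟨z₁, hz₁m, hwz₁⟩ := mem_iUnion₂.mp hw.2.1
  obtain ⟨z₂, hz₂m, hwz₂⟩ := mem_iUnion₂.mp hw.2.2
  obtain ⟨n, c, hc0, hcn, hcJ, hcd⟩ := hz₁m.2
  apply hz₂m.2
  refine ⟨n + 1, fun i => if i = n + 1 then z₂ else c i, by simp [hc0], by simp, ?_, ?_⟩
  · intro i hi
    by_cases hii : i = n + 1
    · simp only [if_pos hii]
      exact hz₂m.1
    · simp only [if_neg hii]
      exact hcJ i (by omega)
  · intro i hi
    show dist (if i = n + 1 then z₂ else c i) (if i + 1 = n + 1 then z₂ else c (i + 1)) ≤ e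
    by_cases hii : i = n
    · have v1 : (if i = n + 1 then z₂ else c i) = c i := if_neg (by omega)
      have v2 : (if i + 1 = n + 1 then z₂ else c (i + 1)) = z₂ := if_pos (by omega)
      rw [v1, v2, hii, hcn]
      have b1 : dist w z₁ < e/2 := mem_ball.mp hwz₁
      have b2 : dist w z₂ < e/2 := mem_ball.mp hwz₂
      have := dist_triangle z₁ w z₂
      rw [dist_comm z₁ w] at this
      linarith
    · rw [if_neg (by omega : ¬ i = n + 1), if_neg (by omega : ¬ i + 1 = n + 1)]
      exact hcd i (by omega)

end AuxLemmas2

open Filter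

universe u

/-- **Lemma.** For every `δ, L` there exists `Δ = Δ(δ, L)` such that: if `Υ` is `δ`-hyperbolic
and `δ`-visible and `y ∈ Υ` is such that some `δ`-adapted visual metric on `∂Υ` with basepoint
`y` is `L`-linearly connected, then for every `R > 0` the space `Υ` is `(Δ, R)`-spherically
connected at `y`. -/
theorem lin_conn_implies_spherically_connected (δ L : ℝ) (hδ : 0 < δ) :
    ∃ Δ : ℝ, ∀ (X : Type u) [inst : MetricSpace X],
      GromovHyperbolic X δ → Visible X δ →
      ∀ (y : X) (m : MetricSpace (GromovBdry X)),
        IsAdaptedVisualMetric δ y m → LinConnWith m L →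
        ∀ R : ℝ, 0 < R → SphericallyConnected X δ Δ R y := by
  classical
  have hκ := kappa_pos
  have hκ1 := one_le_kappa
  have hKL1 : 1 ≤ adaptedKappa ^ 2 * max L 1 := by
    have h2 : (1:ℝ) ≤ max L 1 := le_max_right _ _
    nlinarith
  have hlogKL : 0 ≤ Real.log (adaptedKappa ^ 2 * max L 1) := Real.log_nonneg hKL1
  refine ⟨6 * δ * Real.log (adaptedKappa ^ 2 * max L 1) + 10 * δ + 2, ?_⟩
  intro X inst hyp hvis y m hm hlin R hR
  intro p q hp hq
  have hδ0 : 0 ≤ δ := hδ.le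
  have hR0 : 0 ≤ R := hR.le
  have hprod : 0 ≤ 6 * δ * Real.log (adaptedKappa ^ 2 * max L 1) :=
    mul_nonneg (by linarith) hlogKL
  obtain ⟨σp, hp0, tp, htp, hdp⟩ := hvis y p
  obtain ⟨σq, hq0, tq, htq, hdq⟩ := hvis y q
  have hpq1 : gromovProd y p q ≤ R := by
    have h := gp_le_left y p q; rw [hp] at h; exact h
  have hpq2 : gromovProd y p q ≤ dist q y := by
    rw [gp_comm]; exact gp_le_left _ _ _
  have hpq0 : 0 ≤ gromovProd y p q := gp_nonneg _ _ _
  have hzp : dist (σp.toFun 0) y = 0 := by rw [hp0, dist_self]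
  have hzq : dist (σq.toFun 0) y = 0 := by rw [hq0, dist_self]
  by_cases hne : Quotient.mk (raySetoid X) σp = Quotient.mk (raySetoid X) σq
  · -- Case A : the two boundary points coincide
    obtain ⟨C, hC⟩ := Quotient.exact hne
    have hC0 : 0 ≤ C := le_trans dist_nonneg (hC 0 le_rfl)
    have ht0 : (0:ℝ) ≤ R + C := by linarith
    have e1 : R ≤ gromovProd y (σp.toFun R) (σp.toFun (R + C)) := by
      have h := ray_self_gp (y := y) σp hR0 ht0
      rw [hzp, min_eq_left (by linarith)] at h
      linarith
    have e2 : R ≤ gromovProd y (σp.toFun (R + C)) (σq.toFun (R + C)) := by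
      have h := asymp_ray_gp hq0 hC ht0
      linarith
    have e3 : R ≤ gromovProd y (σq.toFun (R + C)) (σq.toFun R) := by
      have h := ray_self_gp (y := y) σq ht0 hR0
      rw [hzq, min_eq_right (by linarith)] at h
      linarith
    have hp'q' : R - 2*δ ≤ gromovProd y (σp.toFun R) (σq.toFun R) := by
      have k := hyp_trans hδ0 hyp y (σp.toFun R) (σp.toFun (R + C)) (σq.toFun (R + C))
        (σq.toFun R)
      have hmin : R ≤ min (min (gromovProd y (σp.toFun R) (σp.toFun (R + C)))
          (gromovProd y (σp.toFun (R + C)) (σq.toFun (R + C))))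
          (gromovProd y (σq.toFun (R + C)) (σq.toFun R)) :=
        le_min (le_min e1 e2) e3
      linarith
    have hpp' : R - δ ≤ gromovProd y p (σp.toFun R) := by
      have h := near_ray_gp hp0 htp hdp hR0
      rw [hp, min_self] at h
      exact h
    have hqq' : R - δ ≤ gromovProd y q (σq.toFun R) := by
      have h := near_ray_gp hq0 htq hdq hR0
      rw [hq, min_self] at h
      exact h
    have hpq' : gromovProd y p q - 2*δ ≤ gromovProd y p (σq.toFun R) := by
      have k := hyp p q (σq.toFun R) y
      have hmin : gromovProd y p q - δ ≤
          min (gromovProd y p q) (gromovProd y q (σq.toFun R)) := by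
        refine le_min (by linarith) ?_
        have : dist q y = R := hq
        linarith
      linarith
    have hd1 : dist (σp.toFun R) y = R := ray_dist_base hp0 hR0
    have hd2 : dist (σq.toFun R) y = R := ray_dist_base hq0 hR0
    refine ⟨3, fun j => if j = 0 then p else if j = 1 then σp.toFun R else
      if j = 2 then σq.toFun R else q, by norm_num, by norm_num, ?_, ?_, ?_⟩
    · intro i hi
      interval_cases i <;> norm_num <;> rw [dist_comm]
      · exact hp
      · exact hd1
      · exact hd2
      · exact hq
    · intro i hi
      interval_cases i <;> norm_num
      · linarith [hpp']
      · linarith [hp'q']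
      · rw [gp_comm]; linarith [hqq']
    · intro i hi
      interval_cases i <;> norm_num
      · rw [gp_self, hp]; linarith
      · linarith [hpp']
      · linarith [hpq']
      · linarith
  · -- Case B : distinct boundary points
    have hQ : gromovProd y p q - 5*δ ≤
        bProd y (Quotient.mk (raySetoid X) σp) (Quotient.mk (raySetoid X) σq) :=
      gp_le_bProd hδ0 hyp hp0 hq0 htp htq hdp hdq hne
    letI : MetricSpace (GromovBdry X) := m
    obtain ⟨J, hξJ, hηJ, hJconn, hJdiam⟩ :=
      hlin (Quotient.mk (raySetoid X) σp) (Quotient.mk (raySetoid X) σq)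
    have hmesh_pos : 0 < adaptedKappa⁻¹ * Real.exp (-(1/(6*δ)) * (R+1)) :=
      mul_pos (inv_pos.mpr hκ) (Real.exp_pos _)
    obtain ⟨N, ζ, hζ0, hζN, hζJ, hζd⟩ := exists_eps_chain hJconn hξJ hηJ hmesh_pos
    have hN0 : N ≠ 0 := by
      rintro rfl
      exact hne (by rw [hζ0] at hζN; exact hζN)
    set ρ : ℕ → GRay X := fun i => if i = 0 then σp else if i = N then σq
      else Quotient.out (ζ i) with hρ
    have hρ0 : ρ 0 = σp := by simp [hρ]
    have hρN : ρ N = σq := by simp [hρ, hN0]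
    have hρmk : ∀ i ≤ N, Quotient.mk (raySetoid X) (ρ i) = ζ i := by
      intro i hi
      by_cases h0 : i = 0
      · subst h0; rw [hρ0, hζ0]
      · by_cases hiN : i = N
        · subst hiN; rw [hρN, hζN]
        · show Quotient.mk (raySetoid X) (if i = 0 then σp else if i = N then σq
            else Quotient.out (ζ i)) = ζ i
          rw [if_neg h0, if_neg hiN]
          exact Quotient.out_eq _
    -- distance bound from the diameter of J
    have hdiam : ∀ ζ' ∈ J, dist (Quotient.mk (raySetoid X) σp) ζ' ≤
        max L 1 * dist (Quotient.mk (raySetoid X) σp) (Quotient.mk (raySetoid X) σq) := by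
      intro ζ' hζ'
      have h1 : edist (Quotient.mk (raySetoid X) σp) ζ' ≤ EMetric.diam J :=
        EMetric.edist_le_diam_of_mem hξJ hζ'
      have h2 : EMetric.diam J ≤ ENNReal.ofReal (max L 1 *
          dist (Quotient.mk (raySetoid X) σp) (Quotient.mk (raySetoid X) σq)) :=
        le_trans hJdiam (ENNReal.ofReal_le_ofReal
          (mul_le_mul_of_nonneg_right (le_max_left _ _) dist_nonneg))
      have h3 := le_trans h1 h2
      rw [edist_dist] at h3
      exact (ENNReal.ofReal_le_ofReal_iff
        (mul_nonneg (le_trans zero_le_one (le_max_right _ _)) dist_nonneg)).mp h3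
    -- lower bounds on boundary Gromov products of consecutive chain points
    have hpair1 : ∀ i < N, Quotient.mk (raySetoid X) (ρ i) =
        Quotient.mk (raySetoid X) (ρ (i+1)) ∨
        R + 1 ≤ bProd y (Quotient.mk (raySetoid X) (ρ i))
          (Quotient.mk (raySetoid X) (ρ (i+1))) := by
      intro i hi
      rw [hρmk i hi.le, hρmk (i+1) hi]
      by_cases heq : ζ i = ζ (i+1)
      · exact Or.inl heq
      · right
        have hd := hζd i hi
        have hb := (hm (ζ i) (ζ (i+1)) heq).1
        have h1 : Real.exp (-(1/(6*δ)) * bProd y (ζ i) (ζ (i+1))) ≤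
            Real.exp (-(1/(6*δ)) * (R+1)) := by
          have h2 : adaptedKappa⁻¹ * Real.exp (-(1/(6*δ)) * bProd y (ζ i) (ζ (i+1))) ≤
              adaptedKappa⁻¹ * Real.exp (-(1/(6*δ)) * (R+1)) := le_trans hb hd
          exact le_of_mul_le_mul_left h2 (inv_pos.mpr hκ)
        have h3 := Real.exp_le_exp.mp h1
        have h4 := helper_cancel (b := bProd y (ζ i) (ζ (i+1))) (c := R + 1) (K := 0)
          hδ (by linarith)
        linarith
    -- lower bounds on boundary Gromov products with the first point
    have hpair2 : ∀ i ≤ N, Quotient.mk (raySetoid X) σp = Quotient.mk (raySetoid X) (ρ i) ∨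
        gromovProd y p q - 5*δ - 6*δ*Real.log (adaptedKappa ^ 2 * max L 1) ≤
          bProd y (Quotient.mk (raySetoid X) σp) (Quotient.mk (raySetoid X) (ρ i)) := by
      intro i hi
      rw [hρmk i hi]
      by_cases heq : Quotient.mk (raySetoid X) σp = ζ i
      · exact Or.inl heq
      · right
        have hbi := (hm _ (ζ i) heq).1
        have hdi := hdiam (ζ i) (hζJ i hi)
        have hdη := (hm _ _ hne).2
        have s1 : Real.exp (-(1/(6*δ)) * bProd y (Quotient.mk (raySetoid X) σp) (ζ i)) ≤
            adaptedKappa * dist (Quotient.mk (raySetoid X) σp) (ζ i) := by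
          have h := mul_le_mul_of_nonneg_left hbi hκ.le
          rw [← mul_assoc, mul_inv_cancel₀ hκ.ne', one_mul] at h
          exact h
        have s2 : adaptedKappa * dist (Quotient.mk (raySetoid X) σp) (ζ i) ≤
            adaptedKappa * (max L 1 * dist (Quotient.mk (raySetoid X) σp)
              (Quotient.mk (raySetoid X) σq)) :=
          mul_le_mul_of_nonneg_left hdi hκ.le
        have s3 : adaptedKappa * (max L 1 * dist (Quotient.mk (raySetoid X) σp)
              (Quotient.mk (raySetoid X) σq)) ≤
            adaptedKappa * (max L 1 * (adaptedKappa * Real.exp (-(1/(6*δ)) *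
              bProd y (Quotient.mk (raySetoid X) σp) (Quotient.mk (raySetoid X) σq)))) := by
          apply mul_le_mul_of_nonneg_left _ hκ.le
          exact mul_le_mul_of_nonneg_left hdη (le_trans zero_le_one (le_max_right _ _))
        have s4 : Real.exp (-(1/(6*δ)) * bProd y (Quotient.mk (raySetoid X) σp)
              (Quotient.mk (raySetoid X) σq)) ≤
            Real.exp (-(1/(6*δ)) * (gromovProd y p q - 5*δ)) := by
          apply Real.exp_le_exp.mpr
          have h5 : (0:ℝ) < 1/(6*δ) := by positivity
          nlinarith [hQ]
        have s5 : adaptedKappa * (max L 1 * (adaptedKappa * Real.exp (-(1/(6*δ)) *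
              bProd y (Quotient.mk (raySetoid X) σp) (Quotient.mk (raySetoid X) σq)))) =
            (adaptedKappa ^ 2 * max L 1) * Real.exp (-(1/(6*δ)) *
              bProd y (Quotient.mk (raySetoid X) σp) (Quotient.mk (raySetoid X) σq)) := by
          ring
        have s6 : (adaptedKappa ^ 2 * max L 1) * Real.exp (-(1/(6*δ)) *
              bProd y (Quotient.mk (raySetoid X) σp) (Quotient.mk (raySetoid X) σq)) ≤
            (adaptedKappa ^ 2 * max L 1) * Real.exp (-(1/(6*δ)) *
              (gromovProd y p q - 5*δ)) :=
          mul_le_mul_of_nonneg_left s4 (by linarith)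
        have hq1 : Real.exp (-(1/(6*δ)) * bProd y (Quotient.mk (raySetoid X) σp) (ζ i)) ≤
            (adaptedKappa ^ 2 * max L 1) * Real.exp (-(1/(6*δ)) *
              (gromovProd y p q - 5*δ)) := by linarith
        have h7 : (adaptedKappa ^ 2 * max L 1) * Real.exp (-(1/(6*δ)) *
              (gromovProd y p q - 5*δ)) =
            Real.exp (Real.log (adaptedKappa ^ 2 * max L 1) +
              -(1/(6*δ)) * (gromovProd y p q - 5*δ)) := by
          rw [Real.exp_add, Real.exp_log (by linarith : (0:ℝ) <
            adaptedKappa ^ 2 * max L 1)]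
        rw [h7] at hq1
        have hq2 := Real.exp_le_exp.mp hq1
        have h8 := helper_cancel (b := bProd y (Quotient.mk (raySetoid X) σp) (ζ i))
          (c := gromovProd y p q - 5*δ) (K := Real.log (adaptedKappa ^ 2 * max L 1))
          hδ hq2
        linarith
    -- choose a common large time T
    have hev1 : ∀ᶠ t in atTop, ∀ i ∈ Finset.range N,
        R ≤ gromovProd y ((ρ i).toFun t) ((ρ (i+1)).toFun t) := by
      rw [eventually_all_finset]
      intro i hi
      have h := pair_eventually hδ0 hyp y (B := R + 1) (hpair1 i (Finset.mem_range.mp hi))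
      filter_upwards [h] with t ht
      linarith
    have hev2 : ∀ᶠ t in atTop, ∀ i ∈ Finset.range (N+1),
        gromovProd y p q - 5*δ - 6*δ*Real.log (adaptedKappa ^ 2 * max L 1) - 1 ≤
          gromovProd y (σp.toFun t) ((ρ i).toFun t) := by
      rw [eventually_all_finset]
      intro i hi
      exact pair_eventually hδ0 hyp y (hpair2 i (by have := Finset.mem_range.mp hi; omega))
    have hev3 : ∀ᶠ t in atTop, ∀ i ∈ Finset.range (N+1),
        R + dist ((ρ i).toFun 0) y ≤ t := by
      rw [eventually_all_finset]
      intro i _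
      exact eventually_ge_atTop _
    have hev4 : ∀ᶠ t in atTop, R ≤ t := eventually_ge_atTop R
    obtain ⟨T, h1T, h2T, h3T, h4T⟩ := (hev1.and (hev2.and (hev3.and hev4))).exists
    have hT0 : 0 ≤ T := le_trans hR0 h4T
    -- visibility rays towards the points ρ i T
    choose τ hτ0 tt htt0 hdist using fun i : ℕ => hvis y ((ρ i).toFun T)
    have hdistz : ∀ i ≤ N, R ≤ dist ((ρ i).toFun T) y := by
      intro i hi
      have h := ray_dist_lb (y := y) (ρ i) hT0
      have h2 := h3T i (Finset.mem_range.mpr (by omega))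
      linarith
    have hxy : ∀ i, dist ((τ i).toFun R) y = R := fun i => ray_dist_base (hτ0 i) hR0
    have hzx : ∀ i ≤ N, R - δ ≤ gromovProd y ((ρ i).toFun T) ((τ i).toFun R) := by
      intro i hi
      have h := near_ray_gp (hτ0 i) (htt0 i) (hdist i) hR0
      rw [min_eq_right (hdistz i hi)] at h
      exact h
    have hpz0 : R - δ ≤ gromovProd y p (σp.toFun T) := by
      have h := near_ray_gp hp0 htp hdp hT0
      rw [hp, min_eq_left h4T] at h
      exact h
    have hqzN : R - δ ≤ gromovProd y q (σq.toFun T) := by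
      have h := near_ray_gp hq0 htq hdq hT0
      rw [hq, min_eq_left h4T] at h
      exact h
    have hcons : ∀ i < N, R - 3*δ ≤ gromovProd y ((τ i).toFun R) ((τ (i+1)).toFun R) := by
      intro i hi
      have k := hyp_trans hδ0 hyp y ((τ i).toFun R) ((ρ i).toFun T) ((ρ (i+1)).toFun T)
        ((τ (i+1)).toFun R)
      have a1 : R - δ ≤ gromovProd y ((τ i).toFun R) ((ρ i).toFun T) := by
        rw [gp_comm]; exact hzx i hi.le
      have a2 : R ≤ gromovProd y ((ρ i).toFun T) ((ρ (i+1)).toFun T) :=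
        h1T i (Finset.mem_range.mpr hi)
      have a3 : R - δ ≤ gromovProd y ((ρ (i+1)).toFun T) ((τ (i+1)).toFun R) := hzx (i+1) hi
      have hmin : R - δ ≤ min (min (gromovProd y ((τ i).toFun R) ((ρ i).toFun T))
          (gromovProd y ((ρ i).toFun T) ((ρ (i+1)).toFun T)))
          (gromovProd y ((ρ (i+1)).toFun T) ((τ (i+1)).toFun R)) :=
        le_min (le_min a1 (by linarith)) a3
      linarith
    have hpx0 : R - 2*δ ≤ gromovProd y p ((τ 0).toFun R) := by
      have k := hyp p (σp.toFun T) ((τ 0).toFun R) y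
      have a2 : R - δ ≤ gromovProd y (σp.toFun T) ((τ 0).toFun R) := by
        have h := hzx 0 (Nat.zero_le N)
        rw [hρ0] at h
        exact h
      have hmin : R - δ ≤ min (gromovProd y p (σp.toFun T))
          (gromovProd y (σp.toFun T) ((τ 0).toFun R)) := le_min hpz0 a2
      linarith
    have hxNq : R - 2*δ ≤ gromovProd y ((τ N).toFun R) q := by
      have k := hyp ((τ N).toFun R) (σq.toFun T) q y
      have a1 : R - δ ≤ gromovProd y ((τ N).toFun R) (σq.toFun T) := by
        have h := hzx N le_rfl
        rw [hρN] at h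
        rw [gp_comm]
        exact h
      have a2 : R - δ ≤ gromovProd y (σq.toFun T) q := by
        rw [gp_comm]; exact hqzN
      have hmin := le_min a1 a2
      linarith
    have hpxj : ∀ j ≤ N, gromovProd y p q -
        (6*δ*Real.log (adaptedKappa ^ 2 * max L 1) + 10*δ + 2) ≤
        gromovProd y p ((τ j).toFun R) := by
      intro j hj
      have k := hyp_trans hδ0 hyp y p (σp.toFun T) ((ρ j).toFun T) ((τ j).toFun R)
      have a2 : gromovProd y p q - 5*δ - 6*δ*Real.log (adaptedKappa ^ 2 * max L 1) - 1 ≤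
          gromovProd y (σp.toFun T) ((ρ j).toFun T) :=
        h2T j (Finset.mem_range.mpr (by omega))
      have a3 : R - δ ≤ gromovProd y ((ρ j).toFun T) ((τ j).toFun R) := hzx j hj
      have hb : gromovProd y p q -
          (6*δ*Real.log (adaptedKappa ^ 2 * max L 1) + 5*δ + 1) ≤
          min (min (gromovProd y p (σp.toFun T))
            (gromovProd y (σp.toFun T) ((ρ j).toFun T)))
            (gromovProd y ((ρ j).toFun T) ((τ j).toFun R)) := by
        refine le_min (le_min ?_ ?_) ?_
        · linarith [hpz0]
        · linarith [a2]
        · linarith [a3]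
      linarith
    -- assemble the chain
    set c : ℕ → X := fun j => if j = 0 then p else if j ≤ N + 1 then (τ (j-1)).toFun R
      else q with hc
    have hc0 : c 0 = p := by simp [hc]
    have hcmid : ∀ j, 1 ≤ j → j ≤ N + 1 → c j = (τ (j-1)).toFun R := by
      intro j h1 h2
      show (if j = 0 then p else if j ≤ N + 1 then (τ (j-1)).toFun R else q) = _
      rw [if_neg (by omega), if_pos h2]
    have hclast : c (N+2) = q := by
      show (if N+2 = 0 then p else if N+2 ≤ N + 1 then (τ (N+2-1)).toFun R else q) = q
      rw [if_neg (by omega), if_neg (by omega)]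
    refine ⟨N+2, c, hc0, hclast, ?_, ?_, ?_⟩
    · intro i hi
      by_cases h0 : i = 0
      · subst h0; rw [hc0, dist_comm]; exact hp
      · by_cases hmid : i ≤ N+1
        · rw [hcmid i (by omega) hmid, dist_comm]; exact hxy _
        · have hieq : i = N+2 := by omega
          subst hieq; rw [hclast, dist_comm]; exact hq
    · intro i hi
      by_cases h0 : i = 0
      · subst h0
        rw [hc0, hcmid 1 le_rfl (by omega)]
        norm_num
        linarith [hpx0]
      · by_cases hmid : i ≤ N
        · rw [hcmid i (by omega) (by omega), hcmid (i+1) (by omega) (by omega)]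
          have h := hcons (i-1) (by omega)
          have e1 : i - 1 + 1 = i := by omega
          rw [e1] at h
          have e2 : i + 1 - 1 = i := by omega
          rw [e2]
          linarith
        · have hieq : i = N+1 := by omega
          subst hieq
          rw [hcmid (N+1) (by omega) le_rfl]
          have e3 : N+1+1 = N+2 := rfl
          rw [e3, hclast]
          have e4 : N+1-1 = N := by omega
          rw [e4]
          linarith [hxNq]
    · intro i hi
      by_cases h0 : i = 0
      · subst h0; rw [hc0, gp_self, hp]
        linarith
      · by_cases hmid : i ≤ N+1
        · rw [hcmid i (by omega) hmid]
          exact hpxj (i-1) (by omega)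
        · have hieq : i = N+2 := by omega
          subst hieq; rw [hclast]
          linarith
end
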